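/- arXiv:1405.5604 — 6 statements merged into one kernel-verified Lean document; each statement's English description precedes it below -/
import Mathlib

section
/- Over the two-letter alphabet Σ = {a, b}, the family C(∪,·) is not closed under intersection: there exist languages L₁, L₂ ∈ C(∪,·) such that L₁ ∩ L₂ ∉ C(∪,·). -/
namespace Consensual

/-- The double alphabet `Σ̃ = Σ × Bool`: second component `true` means the letter is dotted. -/
abbrev DLetter (S : Type) := S × Bool

variable {S : Type} [DecidableEq S]

/-- Partial match of two letters of the double alphabet:
`a @ å = å @ a = a`, `å @ å = å`, undefined otherwise. -/
def matchLetter (x y : DLetter S) : Option (DLetter S) :=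
  if x.1 = y.1 ∧ (x.2 ∨ y.2) then some (x.1, x.2 && y.2) else none

/-- Letterwise partial match of two words over the double alphabet. -/
def matchWord : List (DLetter S) → List (DLetter S) → Option (List (DLetter S))
  | [], [] => some []
  | x :: xs, y :: ys => do
      let l ← matchLetter x y
      let rest ← matchWord xs ys
      pure (l :: rest)
  | _, _ => none

/-- Elementwise match of two languages over the double alphabet. -/
def matchLang (B C : Language (DLetter S)) : Language (DLetter S) :=
  { w | ∃ u ∈ B, ∃ v ∈ C, matchWord u v = some w }

/-- Iterated match `B^{i@}`. -/
def matchIter (B : Language (DLetter S)) : ℕ → Language (DLetter S)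
  | 0 => B
  | i + 1 => matchLang (matchIter B i) B

/-- Match closure `B^@ = ⋃ i, B^{i@}`. -/
def matchClosure (B : Language (DLetter S)) : Language (DLetter S) :=
  ⨆ i, matchIter B i

/-- The embedding of a word over `Σ` as an undotted word over `Σ̃`. -/
def undotWord (w : List S) : List (DLetter S) := w.map (fun a => (a, false))

/-- The consensual language `C(B) = B^@ ∩ Σ*` with base `B`, as a language over `Σ`. -/
def Cons (B : Language (DLetter S)) : Language S :=
  { w | undotWord w ∈ matchClosure B }

/-- A word consisting only of dotted letters. -/
def allDotted (w : List (DLetter S)) : Prop := ∀ l ∈ w, l.2 = true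

/-- `Σ̊*`, the language of all-dotted words (including ε). -/
def dottedStar : Language (DLetter S) := { w | allDotted w }

/-- `B ⊆ Σ̃* − Σ̊⁺`: no nonempty all-dotted word belongs to `B`. -/
def ProperBase (B : Language (DLetter S)) : Prop :=
  ∀ w ∈ B, w ≠ [] → ¬ allDotted w

/-- `B` is in decomposed form with scaffold `sc` and fill `fl`. -/
def IsDecomposed (B sc fl : Language (DLetter S)) : Prop :=
  ProperBase B ∧ B = sc ⊔ fl ∧ Disjoint sc fl ∧
    Cons fl = (⊥ : Language S) ∧ matchLang sc sc = (⊥ : Language (DLetter S))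

/-- Two decomposed bases `sc' ⊔ fl'` and `sc'' ⊔ fl''` are joinable. -/
def Joinable (sc' fl' sc'' fl'' : Language (DLetter S)) : Prop :=
  IsDecomposed ((sc' ⊔ fl') ⊔ (sc'' ⊔ fl'')) (sc' ⊔ sc'') (fl' ⊔ fl'') ∧
    matchLang sc' fl'' = (⊥ : Language (DLetter S)) ∧
    matchLang sc'' fl' = (⊥ : Language (DLetter S))

/-- `dot`: make every letter of a word dotted. -/
def dotWord (w : List (DLetter S)) : List (DLetter S) := w.map (fun l => (l.1, true))

/-- The dot-product `B' ⊙ B'' = (sc'·sc'') ⊔ fl' ⊔ fl''` of two decomposed bases. -/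
def dotProduct (sc' fl' sc'' fl'' : Language (DLetter S)) : Language (DLetter S) :=
  (sc' * sc'') ⊔ fl' ⊔ fl''

/-- Two decomposed bases `sc' ⊔ fl'` and `sc'' ⊔ fl''` are concatenable. -/
def Concatenable (sc' fl' sc'' fl'' : Language (DLetter S)) : Prop :=
  IsDecomposed (dotProduct sc' fl' sc'' fl'') (sc' * sc'') (fl' ⊔ fl'') ∧
  (∀ w' : List (DLetter S), w' ≠ [] → ∀ y' ∈ sc', ∀ y'' ∈ sc'',
    ((∃ x' ∈ fl', w' = x' ++ dotWord y'' ∧ (matchWord x' y').isSome) ↔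
      (w' ∈ fl' ∧ (matchWord w' (y' ++ y'')).isSome))) ∧
  (∀ w'' : List (DLetter S), w'' ≠ [] → ∀ y' ∈ sc', ∀ y'' ∈ sc'',
    ((∃ x'' ∈ fl'', w'' = dotWord y' ++ x'' ∧ (matchWord x'' y'').isSome) ↔
      (w'' ∈ fl'' ∧ (matchWord w'' (y' ++ y'')).isSome)))

/-! ### Slots, scaffolds and fills -/

/-- The word `å a^{r−1} å a^{m−r−1}`. -/
def slotWord (m r : ℕ) (a : S) : List (DLetter S) :=
  (a, true) :: (List.replicate (r - 1) (a, false) ++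
    (a, true) :: List.replicate (m - r - 1) (a, false))

/-- `R_m(a) = {å a^{r−1} å a^{m−r−1} : r ∈ R}`. -/
def Rm (m : ℕ) (R : Set ℕ) (a : S) : Language (DLetter S) :=
  { w | ∃ r ∈ R, w = slotWord m r a }

/-- Projection of a word over `Σ̃` on the two-letter alphabet `{a, å}`. -/
def projA (a : S) (x : List (DLetter S)) : List (DLetter S) :=
  x.filter (fun l => decide (l.1 = a))

/-- The scaffold language `sc_{R,m}`. -/
def scaffold (m : ℕ) (R : Set ℕ) : Language (DLetter S) :=
  { x | ∀ a : S, projA a x ∈ KStar.kstar (Rm m R a ⊔ {[(a, false)]}) }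

/-- `switch`: interchange `a` and `å` in every position. -/
def switchWord (w : List (DLetter S)) : List (DLetter S) := w.map (fun l => (l.1, !l.2))

/-- The fill language `fl_{R,m} = switch(sc_{R,m}) − Σ̊*`. -/
def fill (m : ℕ) (R : Set ℕ) : Language (DLetter S) :=
  { w | ∃ u ∈ scaffold (S := S) m R, w = switchWord u } \ dottedStar

/-- A language is shiftable if it absorbs all-dotted padding on both sides. -/
def Shiftable (F : Language (DLetter S)) : Prop :=
  F = dottedStar * F * dottedStar

/-- `R` is a set of slots of module `m`. -/
def SlotSet (m : ℕ) (R : Set ℕ) : Prop :=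
  4 ≤ m ∧ 2 ∣ m ∧ R.Nonempty ∧ ∀ r ∈ R, 1 ≤ r ∧ r ≤ m / 2 - 1

/-- The factor `α(i)…α(i+m−1)` of `α` (positions numbered from 1). -/
def factorAt (α : List (DLetter S)) (i m : ℕ) : List (DLetter S) :=
  (α.drop (i - 1)).take m

/-- `i` is a restarting point of `α ∈ π_ã(sc_{R,m})`. -/
def RestartScaffold (m : ℕ) (R : Set ℕ) (a : S) (α : List (DLetter S)) (i : ℕ) : Prop :=
  1 ≤ i ∧ i + m - 1 ≤ α.length ∧ factorAt α i m ∈ Rm m R a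

/-- `i` is a restarting point of `α ∈ π_ã(fl_{R̂,m})`. -/
def RestartFill (m : ℕ) (Rh : Set ℕ) (a : S) (α : List (DLetter S)) (i : ℕ) : Prop :=
  1 ≤ i ∧ i + m - 1 ≤ α.length ∧ (∃ u ∈ Rm m Rh a, factorAt α i m = switchWord u)

/-! ### Parikh images, COM-SLIP, and the family C(⊔,·) -/

/-- The Parikh image of a word. -/
def parikh (w : List S) : S → ℕ := fun a => w.count a

/-- A linear subset of `ℕ^Σ`. -/
def IsLinearSet (T : Set (S → ℕ)) : Prop :=
  ∃ (q : ℕ) (c : S → ℕ) (p : Fin q → S → ℕ),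
    T = { v | ∃ n : Fin q → ℕ, v = c + ∑ i, n i • p i }

/-- A semilinear subset of `ℕ^Σ`: a finite union of linear sets. -/
def IsSemilinearSet (T : Set (S → ℕ)) : Prop :=
  ∃ (t : ℕ) (f : Fin t → Set (S → ℕ)), (∀ i, IsLinearSet (f i)) ∧ T = ⋃ i, f i

/-- A commutative language: membership only depends on the Parikh image. -/
def CommutativeLang (L : Language S) : Prop :=
  ∀ w ∈ L, ∀ v : List S, parikh v = parikh w → v ∈ L

/-- A COM-SLIP language: commutative with semilinear Parikh image. -/
def IsComSlip (L : Language S) : Prop :=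
  CommutativeLang L ∧ IsSemilinearSet (parikh '' L)

/-- The family `C(⊔,·)`: the smallest family containing the COM-SLIP languages and
closed under binary union and concatenation. -/
inductive CUC {S : Type} [DecidableEq S] : Language S → Prop
  | base {L : Language S} : IsComSlip L → CUC L
  | union {L M : Language S} : CUC L → CUC M → CUC (L ⊔ M)
  | concat {L M : Language S} : CUC L → CUC M → CUC (L * M)

/-- Regular languages, via acceptance by a DFA with finitely many states. -/
def IsRegularLang {γ : Type} (B : Language γ) : Prop :=
  ∃ (σ : Type) (_ : Fintype σ) (M : DFA γ σ), M.accepts = B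

/-! ### Shuffle, appending, and the base `D` for a COM-LIP language -/

/-- `IsShuffle x y z`: `z` is an interleaving of `x` and `y`. -/
inductive IsShuffle {γ : Type} : List γ → List γ → List γ → Prop
  | nil : IsShuffle [] [] []
  | left {x : γ} {xs ys zs} : IsShuffle xs ys zs → IsShuffle (x :: xs) ys (x :: zs)
  | right {y : γ} {xs ys zs} : IsShuffle xs ys zs → IsShuffle xs (y :: ys) (y :: zs)

/-- The shuffle of two languages. -/
def shuffleLang {γ : Type} (L M : Language γ) : Language γ :=
  { z | ∃ x ∈ L, ∃ y ∈ M, IsShuffle x y z }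

/-- Split `w` as `u·v` where `v` is the longest suffix of `w` with no occurrence
of `a` or `å`; returns `(u, v)`. -/
def splitSuffix (a : S) (w : List (DLetter S)) : List (DLetter S) × List (DLetter S) :=
  ((w.reverse.dropWhile (fun l => decide (l.1 ≠ a))).reverse,
   (w.reverse.takeWhile (fun l => decide (l.1 ≠ a))).reverse)

/-- The append operation `B ◁ A` for `A ⊆ a⁺`. -/
def appendA (a : S) (B : Language (DLetter S)) (A : Language S) : Language (DLetter S) :=
  { w' | ∃ w ∈ B, ∃ s ∈ A, ∃ z, IsShuffle (splitSuffix a w).2 (undotWord s) z ∧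
      w' = (splitSuffix a w).1 ++ z }

/-- Projection of a language over `Σ` on the single letter `a`. -/
def projLetter (a : S) (F : Language S) : Language S :=
  { y | ∃ w ∈ F, y = w.filter (fun l => decide (l = a)) }

/-- Letter-by-letter appending `B ◁ F` (over the alphabet `Fin k`,
processing the letters `a₁, …, a_k` in order). -/
def lblAppend {k : ℕ} (B : Language (DLetter (Fin k))) (F : Language (Fin k)) :
    Language (DLetter (Fin k)) :=
  (List.finRange k).foldl (fun Bc a => appendA a Bc (projLetter a F)) B

/-- Projection of a word over `Σ̃` on the undotted letters. -/
def projSigma (x : List (DLetter S)) : List S :=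
  (x.filter (fun l => !l.2)).map Prod.fst

/-- The fill part `X` of the decomposed base for a COM-LIP language with periods `p`. -/
def Xlang {k q : ℕ} (m r : ℕ) (p : Fin q → Fin k → ℕ) : Language (DLetter (Fin k)) :=
  { x | x ∈ fill m {r} ∧ ∃ i : Fin q, parikh (projSigma x) = p i }

/-- `Y = (R_m(a₁))* ⧢ … ⧢ (R_m(a_k))*`. -/
def Ylang (k : ℕ) (m : ℕ) (R : Set ℕ) : Language (DLetter (Fin k)) :=
  (List.finRange k).foldl
    (fun acc a => shuffleLang acc (KStar.kstar (Rm m R a))) (1 : Language (DLetter (Fin k)))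

/-- The finite commutative language `W` with Parikh image
`{c + h₁p⁽¹⁾ + … + h_qp⁽q⁾ : 0 ≤ hⱼ < m/2}`. -/
def Wlang {k q : ℕ} (m : ℕ) (c : Fin k → ℕ) (p : Fin q → Fin k → ℕ) : Language (Fin k) :=
  { w | ∃ h : Fin q → ℕ, (∀ i, h i < m / 2) ∧ parikh w = c + ∑ i, h i • p i }

/-- The decomposed base `D = X ⊔ (Y ◁ W)` for a COM-LIP language. -/
def Dlang {k q : ℕ} (m r : ℕ) (c : Fin k → ℕ) (p : Fin q → Fin k → ℕ) :
    Language (DLetter (Fin k)) :=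
  Xlang m r p ⊔ lblAppend (Ylang k m {r}) (Wlang m c p)

/-- `matchListAll [x₁, …, x_n] = some u` iff `u = x₁ @ x₂ @ … @ x_n`. -/
def matchListAll : List (List (DLetter S)) → Option (List (DLetter S))
  | [] => none
  | [x] => some x
  | x :: xs => (matchListAll xs).bind (fun u => matchWord x u)


end Consensual

/-!
Take `L₁ = a*b*`, the product of the COM-SLIP languages `a*` and `b*`, and `L₂` the words with
as many `a`s as `b`s, so that `L₁ ∩ L₂ = {aⁿbⁿ}`. For `L ⊆ a*b*` consider the set of exponent
pairs `(i, j)` with `aⁱbʲ ∈ L`. For a commutative `L ⊆ a*b*` these pairs lie on the two axes,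
and the pairs of a product `M · N` are the sums `x + y` of pairs of `M` and `N` with
`x.2 = 0 ∨ y.1 = 0`; hence, by induction, the pairs of any `L ⊆ a*b*` in `C(∪,·)` form a finite
union of rectangles `A × B`. The diagonal is no such union: two of its points `(n, n)`, `(n', n')`
lie in a common rectangle, which then contains `(n, n')`.
-/

namespace Consensual

section Parikh

variable {S : Type}

theorem isLinearSet_range_smul (p : S → ℕ) : IsLinearSet (Set.range fun n : ℕ => n • p) := by
  refine ⟨1, 0, fun _ => p, Set.ext fun v => ⟨?_, ?_⟩⟩
  · rintro ⟨n, rfl⟩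
    exact ⟨fun _ => n, by simp⟩
  · rintro ⟨n, rfl⟩
    exact ⟨n 0, by simp⟩

theorem IsLinearSet.isSemilinearSet {T : Set (S → ℕ)} (h : IsLinearSet T) :
    IsSemilinearSet T :=
  ⟨1, fun _ => T, fun _ => h, (Set.iUnion_const T).symm⟩

variable [DecidableEq S]

theorem parikh_surjective [Fintype S] : Function.Surjective (parikh (S := S)) := by
  intro v
  refine ⟨(∑ a, Multiset.replicate (v a) a).toList, funext fun b => ?_⟩
  rw [parikh, ← Multiset.coe_count, Multiset.coe_toList, Multiset.count_sum']
  simp [Multiset.count_replicate]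

theorem parikh_eq_of_perm {v w : List S} (h : v.Perm w) : parikh v = parikh w :=
  funext h.count_eq

theorem isComSlip_parikh_preimage [Fintype S] {T : Set (S → ℕ)} (hT : IsSemilinearSet T) :
    IsComSlip {w : List S | parikh w ∈ T} := by
  refine ⟨fun w hw v hv => (congrArg (· ∈ T) hv).mpr hw, ?_⟩
  change IsSemilinearSet (parikh '' (parikh ⁻¹' T))
  rwa [Set.image_preimage_eq T parikh_surjective]

def parikhMultiples (p : S → ℕ) : Language S := {w | parikh w ∈ Set.range fun n : ℕ => n • p}

theorem isComSlip_parikhMultiples [Fintype S] (p : S → ℕ) : IsComSlip (parikhMultiples p) :=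
  isComSlip_parikh_preimage (isLinearSet_range_smul p).isSemilinearSet

theorem parikh_eq_smul_single_iff {a : S} {w : List S} {n : ℕ} :
    parikh w = n • Pi.single a 1 ↔ w = List.replicate n a := by
  constructor
  · intro h
    have hcount b : w.count b = if b = a then n else 0 := by
      simpa [parikh, Pi.single_apply] using congrFun h b
    have hmem : ∀ b ∈ w, b = a := fun b hb => by
      by_contra hba
      exact (List.count_pos_iff.mpr hb).ne' (by simp [hcount, hba])
    refine List.eq_replicate_iff.mpr ⟨?_, hmem⟩
    rw [← List.count_eq_length.mpr fun b hb => (hmem b hb).symm, hcount, if_pos rfl]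
  · rintro rfl
    funext b
    by_cases hb : b = a
    · simp [parikh, hb]
    · simp [parikh, List.count_replicate, hb, Ne.symm hb]

theorem mem_parikhMultiples_single_iff {a : S} {w : List S} :
    w ∈ parikhMultiples (Pi.single a 1) ↔ ∃ n, w = List.replicate n a := by
  show (∃ n, n • Pi.single a 1 = parikh w) ↔ _
  exact exists_congr fun n => eq_comm.trans parikh_eq_smul_single_iff

end Parikh

section BoxUnion

variable {α β : Type*}

def IsBoxUnion (T : Set (α × β)) : Prop :=
  ∃ R : Set (Set α × Set β), R.Finite ∧ T = ⋃ r ∈ R, r.1 ×ˢ r.2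

theorem isBoxUnion_empty : IsBoxUnion (∅ : Set (α × β)) :=
  ⟨∅, Set.finite_empty, by simp⟩

theorem isBoxUnion_prod (A : Set α) (B : Set β) : IsBoxUnion (A ×ˢ B) :=
  ⟨{(A, B)}, Set.finite_singleton _, by simp⟩

theorem IsBoxUnion.union {T T' : Set (α × β)} (h : IsBoxUnion T) (h' : IsBoxUnion T') :
    IsBoxUnion (T ∪ T') := by
  obtain ⟨R, hR, rfl⟩ := h
  obtain ⟨R', hR', rfl⟩ := h'
  exact ⟨R ∪ R', hR.union hR', (Set.biUnion_union R R' _).symm⟩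

theorem isBoxUnion_biUnion {ι : Type*} {I : Set ι} (hI : I.Finite) {T : ι → Set (α × β)}
    (h : ∀ i ∈ I, IsBoxUnion (T i)) : IsBoxUnion (⋃ i ∈ I, T i) := by
  choose! R hR hT using h
  refine ⟨⋃ i ∈ I, R i, hI.biUnion hR, ?_⟩
  rw [Set.iUnion₂_congr hT]
  simp only [Set.biUnion_iUnion]

theorem isBoxUnion_of_subset_axes [Zero α] [Zero β] {T : Set (α × β)}
    (h : ∀ p ∈ T, p.1 = 0 ∨ p.2 = 0) : IsBoxUnion T := by
  have hT : T = {a | (a, 0) ∈ T} ×ˢ {0} ∪ {0} ×ˢ {b | (0, b) ∈ T} := by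
    ext ⟨a, b⟩
    constructor
    · intro hab
      rcases h _ hab with rfl | rfl
      · exact Or.inr ⟨rfl, hab⟩
      · exact Or.inl ⟨hab, rfl⟩
    · rintro (⟨hab, rfl : b = 0⟩ | ⟨rfl : a = 0, hab⟩) <;> exact hab
  rw [hT]
  exact (isBoxUnion_prod _ _).union (isBoxUnion_prod _ _)

theorem not_isBoxUnion_diagonal [Infinite α] : ¬ IsBoxUnion (Set.diagonal α) := by
  rintro ⟨R, hR, hT⟩
  have : Finite R := hR.to_subtype
  have hbox (a : α) : ∃ r : R, (a, a) ∈ r.1.1 ×ˢ r.1.2 := by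
    have : (a, a) ∈ ⋃ r ∈ R, r.1 ×ˢ r.2 := hT ▸ Set.mem_diagonal a
    simpa using this
  choose f hf using hbox
  obtain ⟨a, b, hab, hfab⟩ := Finite.exists_ne_map_eq_of_infinite f
  have : (a, b) ∈ Set.diagonal α := by
    rw [hT]
    exact Set.mem_biUnion (f a).2 ⟨(hf a).1, hfab ▸ (hf b).2⟩
  exact hab this

end BoxUnion

section TwoLetters

/-- `aⁱbʲ` with `a = 0` and `b = 1`; these are exactly the sorted words over `Fin 2`
(`eq_abWord_of_pairwise`). -/
def abWord (i j : ℕ) : List (Fin 2) := List.replicate i 0 ++ List.replicate j 1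

def exponents (L : Language (Fin 2)) : Set (ℕ × ℕ) := {p | abWord p.1 p.2 ∈ L}

/-- The exponents of the products `a^{x.1} b^{x.2} · a^{y.1} b^{y.2}` that stay in `a*b*`. -/
def abSum (T T' : Set (ℕ × ℕ)) : Set (ℕ × ℕ) :=
  {p | ∃ x ∈ T, ∃ y ∈ T', (x.2 = 0 ∨ y.1 = 0) ∧ x + y = p}

variable {i j k l : ℕ}

@[simp] theorem count_zero_abWord : (abWord i j).count 0 = i := by
  simp [abWord, List.count_replicate]

@[simp] theorem count_one_abWord : (abWord i j).count 1 = j := by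
  simp [abWord, List.count_replicate]

theorem abWord_inj : abWord i j = abWord k l ↔ i = k ∧ j = l := by
  refine ⟨fun h => ⟨?_, ?_⟩, fun h => h.1 ▸ h.2 ▸ rfl⟩
  · simpa using congrArg (List.count 0) h
  · simpa using congrArg (List.count 1) h

theorem pairwise_abWord : (abWord i j).Pairwise (· ≤ ·) := by
  simp only [abWord, List.pairwise_append, List.pairwise_replicate, le_refl, or_true, true_and]
  intro a ha b hb
  rw [List.eq_of_mem_replicate ha, List.eq_of_mem_replicate hb]
  decide

theorem eq_abWord_of_pairwise {w : List (Fin 2)} (h : w.Pairwise (· ≤ ·)) :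
    w = abWord (w.count 0) (w.count 1) := by
  refine List.Perm.eq_of_pairwise' h pairwise_abWord (List.perm_iff_count.mpr fun a => ?_)
  fin_cases a <;> simp

theorem pairwise_abWord_append_abWord_iff :
    (abWord i j ++ abWord k l).Pairwise (· ≤ ·) ↔ j = 0 ∨ k = 0 := by
  simp only [List.pairwise_append, pairwise_abWord, true_and]
  constructor
  · intro h
    by_contra! hjk
    have := h 1 (by simp [abWord, hjk.1]) 0 (by simp [abWord, hjk.2])
    exact absurd this (by decide)
  · rintro (rfl | rfl) a ha b hb
    · rw [abWord, List.replicate_zero, List.append_nil] at ha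
      exact List.eq_of_mem_replicate ha ▸ Fin.zero_le b
    · rw [abWord, List.replicate_zero, List.nil_append] at hb
      exact List.eq_of_mem_replicate hb ▸ Fin.le_last a

theorem abWord_append_abWord (h : j = 0 ∨ k = 0) :
    abWord i j ++ abWord k l = abWord (i + k) (j + l) := by
  rw [eq_abWord_of_pairwise (pairwise_abWord_append_abWord_iff.mpr h)]
  simp

theorem exponents_mul (M N : Language (Fin 2)) :
    exponents (M * N) = abSum (exponents M) (exponents N) := by
  ext p
  constructor
  · intro h
    obtain ⟨u, hu, v, hv, huv⟩ := Language.mem_mul.mp h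
    have hsorted := huv ▸ pairwise_abWord
    obtain ⟨hu_sorted, hv_sorted, -⟩ := List.pairwise_append.mp hsorted
    rw [eq_abWord_of_pairwise hu_sorted] at hu hsorted huv
    rw [eq_abWord_of_pairwise hv_sorted] at hv hsorted huv
    have hglue := pairwise_abWord_append_abWord_iff.mp hsorted
    refine ⟨(u.count 0, u.count 1), hu, (v.count 0, v.count 1), hv, hglue, ?_⟩
    rw [abWord_append_abWord hglue] at huv
    exact Prod.ext (abWord_inj.mp huv).1 (abWord_inj.mp huv).2
  · rintro ⟨x, hx, y, hy, hxy, rfl⟩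
    exact ⟨_, hx, _, hy, abWord_append_abWord hxy⟩

theorem abSum_biUnion {ι κ : Type*} (I : Set ι) (K : Set κ) (X : ι → Set (ℕ × ℕ))
    (Y : κ → Set (ℕ × ℕ)) :
    abSum (⋃ i ∈ I, X i) (⋃ k ∈ K, Y k) = ⋃ i ∈ I, ⋃ k ∈ K, abSum (X i) (Y k) := by
  ext p
  simp only [abSum, Set.mem_iUnion, Set.mem_ofPred_eq]
  grind

open scoped Pointwise in
theorem abSum_prod (A B C D : Set ℕ) :
    abSum (A ×ˢ B) (C ×ˢ D) =
      {i | 0 ∈ B ∧ i ∈ A + C} ×ˢ D ∪ A ×ˢ {j | 0 ∈ C ∧ j ∈ B + D} := by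
  ext ⟨i, j⟩
  simp only [abSum, Set.mem_prod, Set.mem_union, Set.mem_ofPred_eq, Set.mem_add, Prod.exists,
    Prod.mk_add_mk, Prod.mk.injEq]
  constructor
  · rintro ⟨i₁, j₁, ⟨hi₁, hj₁⟩, i₂, j₂, ⟨hi₂, hj₂⟩, rfl | rfl, rfl, rfl⟩
    · exact Or.inl ⟨⟨hj₁, i₁, hi₁, i₂, hi₂, rfl⟩, by simpa using hj₂⟩
    · exact Or.inr ⟨by simpa using hi₁, hi₂, j₁, hj₁, j₂, hj₂, rfl⟩
  · rintro (⟨⟨h0, i₁, hi₁, i₂, hi₂, rfl⟩, hj⟩ | ⟨hi, h0, j₁, hj₁, j₂, hj₂, rfl⟩)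
    · exact ⟨i₁, 0, ⟨hi₁, h0⟩, i₂, j, ⟨hi₂, hj⟩, Or.inl rfl, by simp⟩
    · exact ⟨i, j₁, ⟨hi, hj₁⟩, 0, j₂, ⟨h0, hj₂⟩, Or.inr rfl, by simp⟩

theorem IsBoxUnion.abSum {T T' : Set (ℕ × ℕ)} (h : IsBoxUnion T) (h' : IsBoxUnion T') :
    IsBoxUnion (abSum T T') := by
  obtain ⟨R, hR, rfl⟩ := h
  obtain ⟨R', hR', rfl⟩ := h'
  rw [abSum_biUnion]
  refine isBoxUnion_biUnion hR fun r _ => isBoxUnion_biUnion hR' fun r' _ => ?_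
  rw [abSum_prod]
  exact (isBoxUnion_prod _ _).union (isBoxUnion_prod _ _)

theorem isBoxUnion_exponents_of_commutative {L : Language (Fin 2)} (hL : CommutativeLang L)
    (hsorted : ∀ w ∈ L, w.Pairwise (· ≤ ·)) : IsBoxUnion (exponents L) := by
  refine isBoxUnion_of_subset_axes fun p hp => ?_
  have hswap : abWord 0 p.2 ++ abWord p.1 0 ∈ L :=
    hL _ hp _ (parikh_eq_of_perm (by simpa [abWord] using List.perm_append_comm))
  exact (pairwise_abWord_append_abWord_iff.mp (hsorted _ hswap)).symm

theorem CUC.isBoxUnion_exponents {L : Language (Fin 2)} (h : CUC L)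
    (hsorted : ∀ w ∈ L, w.Pairwise (· ≤ ·)) : IsBoxUnion (exponents L) := by
  induction h with
  | base hL => exact isBoxUnion_exponents_of_commutative hL.1 hsorted
  | union _ _ ihL ihM =>
    exact (ihL fun w hw => hsorted w (Or.inl hw)).union (ihM fun w hw => hsorted w (Or.inr hw))
  | @concat L M _ _ ihL ihM =>
    rw [exponents_mul]
    by_cases hne : (∃ u, u ∈ L) ∧ ∃ v, v ∈ M
    · obtain ⟨⟨u, hu⟩, ⟨v, hv⟩⟩ := hne
      refine (ihL fun w hw => ?_).abSum (ihM fun w hw => ?_)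
      · exact (hsorted _ (Language.append_mem_mul hw hv)).sublist (List.sublist_append_left _ _)
      · exact (hsorted _ (Language.append_mem_mul hu hw)).sublist (List.sublist_append_right _ _)
    · have hempty : abSum (exponents L) (exponents M) = ∅ :=
        Set.eq_empty_of_forall_notMem fun _ ⟨_, hx, _, hy, _⟩ => hne ⟨⟨_, hx⟩, ⟨_, hy⟩⟩
      rw [hempty]
      exact isBoxUnion_empty

theorem mem_aStar_mul_bStar_iff {w : List (Fin 2)} :
    w ∈ parikhMultiples (Pi.single 0 1) * parikhMultiples (Pi.single 1 1) ↔
      ∃ i j, w = abWord i j := by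
  simp only [Language.mem_mul, mem_parikhMultiples_single_iff]
  constructor
  · rintro ⟨_, ⟨i, rfl⟩, _, ⟨j, rfl⟩, rfl⟩
    exact ⟨i, j, rfl⟩
  · rintro ⟨i, j, rfl⟩
    exact ⟨_, ⟨i, rfl⟩, _, ⟨j, rfl⟩, rfl⟩

theorem abWord_mem_parikhMultiples_one_iff : abWord i j ∈ parikhMultiples 1 ↔ i = j := by
  show (∃ n, n • 1 = parikh (abWord i j)) ↔ i = j
  constructor
  · rintro ⟨n, hn⟩
    have h0 := congrFun hn 0
    have h1 := congrFun hn 1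
    simp only [parikh, Pi.smul_apply, Pi.one_apply, smul_eq_mul, mul_one, count_zero_abWord,
      count_one_abWord] at h0 h1
    omega
  · rintro rfl
    exact ⟨i, funext fun a => by fin_cases a <;> simp [parikh]⟩

theorem exponents_aStar_mul_bStar_inf :
    exponents (parikhMultiples (Pi.single 0 1) * parikhMultiples (Pi.single 1 1) ⊓
      parikhMultiples 1) = Set.diagonal ℕ := by
  ext ⟨i, j⟩
  exact ⟨fun h => abWord_mem_parikhMultiples_one_iff.mp h.2,
    fun h => ⟨mem_aStar_mul_bStar_iff.mpr ⟨i, j, rfl⟩, abWord_mem_parikhMultiples_one_iff.mpr h⟩⟩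

end TwoLetters

/-- Over the two-letter alphabet, the family `C(∪,·)` is not closed
under intersection. -/
theorem cuc_not_closed_under_intersection :
    ∃ L₁ L₂ : Language (Fin 2), CUC L₁ ∧ CUC L₂ ∧ ¬ CUC (L₁ ⊓ L₂) := by
  refine ⟨parikhMultiples (Pi.single 0 1) * parikhMultiples (Pi.single 1 1), parikhMultiples 1,
    .concat (.base (isComSlip_parikhMultiples _)) (.base (isComSlip_parikhMultiples _)),
    .base (isComSlip_parikhMultiples _), fun h => not_isBoxUnion_diagonal (α := ℕ) ?_⟩
  rw [← exponents_aStar_mul_bStar_inf]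
  refine h.isBoxUnion_exponents fun w hw => ?_
  obtain ⟨i, j, rfl⟩ := mem_aStar_mul_bStar_iff.mp hw.1
  exact pairwise_abWord

end Consensual
end

section
/- If B ⊆ Σ̃* − Σ̊⁺ is a base in decomposed form with scaffold sc and fill fl, then C(B) = (sc ∪ (sc @ fl^@)) ∩ Σ*. -/
namespace Consensual

variable {S : Type} [DecidableEq S]

/-! Match is commutative and associative on words, hence on languages, where it also
distributes over unions. So `(sc ∪ fl)^{(i+1)@}` expands like a binomial power, and every
term with two scaffold factors vanishes because `sc @ sc = ∅`; what is left is
`fl^{(i+1)@} ∪ sc @ fl^{i@}`. The undotted words of `fl^@` form `C(fl) = ∅`. -/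

theorem matchLetter_comm (x y : DLetter S) : matchLetter x y = matchLetter y x := by
  unfold matchLetter
  by_cases h : x.1 = y.1
  · simp [h, or_comm, Bool.and_comm]
  · simp [h, Ne.symm h]

theorem matchLetter_eq_some_assoc {x y z l t : DLetter S} (hxy : matchLetter x y = some l)
    (hlz : matchLetter l z = some t) :
    ∃ m, matchLetter y z = some m ∧ matchLetter x m = some t := by
  obtain ⟨a, b⟩ := x; obtain ⟨c, d⟩ := y; obtain ⟨e, f⟩ := z
  unfold matchLetter at *
  split_ifs at hxy with h₁
  cases hxy
  split_ifs at hlz with h₂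
  cases hlz
  obtain ⟨rfl, h₁⟩ := h₁
  obtain ⟨rfl, h₂⟩ := h₂
  cases b <;> cases d <;> cases f <;> simp_all

theorem matchWord_nil_left {v w : List (DLetter S)} :
    matchWord [] v = some w ↔ v = [] ∧ w = [] := by
  cases v <;> simp [matchWord, eq_comm]

theorem matchWord_cons_left {x : DLetter S} {xs v w : List (DLetter S)} :
    matchWord (x :: xs) v = some w ↔
      ∃ y ys l r, v = y :: ys ∧ matchLetter x y = some l ∧ matchWord xs ys = some r ∧
        w = l :: r := by
  cases v with
  | nil => simp [matchWord]
  | cons y ys =>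
    simp only [matchWord, Option.bind_eq_bind, Option.bind_eq_some_iff, Option.pure_def,
      Option.some.injEq, List.cons.injEq]
    aesop

theorem matchWord_comm (u v : List (DLetter S)) : matchWord u v = matchWord v u := by
  induction u generalizing v with
  | nil => cases v <;> rfl
  | cons x xs ih =>
    cases v with
    | nil => rfl
    | cons y ys => simp only [matchWord, matchLetter_comm x y, ih ys]

theorem matchWord_eq_some_assoc {u v t z w : List (DLetter S)} (huv : matchWord u v = some t)
    (htz : matchWord t z = some w) :
    ∃ s, matchWord v z = some s ∧ matchWord u s = some w := by
  induction u generalizing v t z w with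
  | nil =>
    obtain ⟨rfl, rfl⟩ := matchWord_nil_left.1 huv
    obtain ⟨rfl, rfl⟩ := matchWord_nil_left.1 htz
    exact ⟨[], rfl, rfl⟩
  | cons x xs ih =>
    obtain ⟨y, ys, l, r, rfl, hxy, hr, rfl⟩ := matchWord_cons_left.1 huv
    obtain ⟨c, zs, l', r', rfl, hlc, hr', rfl⟩ := matchWord_cons_left.1 htz
    obtain ⟨m, hyc, hxm⟩ := matchLetter_eq_some_assoc hxy hlc
    obtain ⟨s, hs, hxs⟩ := ih hr hr'
    exact ⟨m :: s, matchWord_cons_left.2 ⟨c, zs, m, s, rfl, hyc, hs, rfl⟩,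
      matchWord_cons_left.2 ⟨m, s, l', r', rfl, hxm, hxs, rfl⟩⟩

theorem matchLang_comm (A C : Language (DLetter S)) : matchLang A C = matchLang C A := by
  ext w
  constructor <;>
  · rintro ⟨u, hu, v, hv, huv⟩
    exact ⟨v, hv, u, hu, matchWord_comm u v ▸ huv⟩

theorem matchLang_assoc_le (A C E : Language (DLetter S)) :
    matchLang (matchLang A C) E ≤ matchLang A (matchLang C E) := by
  rintro w ⟨t, ⟨u, hu, v, hv, huv⟩, z, hz, htz⟩
  obtain ⟨s, hs, hus⟩ := matchWord_eq_some_assoc huv htz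
  exact ⟨u, hu, s, ⟨v, hv, z, hz, hs⟩, hus⟩

theorem matchLang_assoc (A C E : Language (DLetter S)) :
    matchLang (matchLang A C) E = matchLang A (matchLang C E) := by
  refine le_antisymm (matchLang_assoc_le A C E) ?_
  calc matchLang A (matchLang C E) = matchLang (matchLang E C) A := by
        rw [matchLang_comm, matchLang_comm C]
    _ ≤ matchLang E (matchLang C A) := matchLang_assoc_le E C A
    _ = matchLang (matchLang A C) E := by rw [matchLang_comm, matchLang_comm C]

theorem matchLang_sup_left (A C E : Language (DLetter S)) :
    matchLang (A ⊔ C) E = matchLang A E ⊔ matchLang C E := by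
  ext w
  constructor
  · rintro ⟨u, hu | hu, v, hv, huv⟩
    exacts [Or.inl ⟨u, hu, v, hv, huv⟩, Or.inr ⟨u, hu, v, hv, huv⟩]
  · rintro (⟨u, hu, v, hv, huv⟩ | ⟨u, hu, v, hv, huv⟩)
    exacts [⟨u, Or.inl hu, v, hv, huv⟩, ⟨u, Or.inr hu, v, hv, huv⟩]

theorem matchLang_sup_right (A C E : Language (DLetter S)) :
    matchLang A (C ⊔ E) = matchLang A C ⊔ matchLang A E := by
  simp only [matchLang_comm A, matchLang_sup_left]

theorem matchLang_bot_left (A : Language (DLetter S)) : matchLang ⊥ A = ⊥ :=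
  le_bot_iff.1 fun _ ⟨_, hu, _⟩ => hu

theorem matchLang_iSup_right {ι : Sort*} (A : Language (DLetter S))
    (f : ι → Language (DLetter S)) :
    matchLang A (⨆ i, f i) = ⨆ i, matchLang A (f i) := by
  ext w
  constructor
  · rintro ⟨u, hu, v, hv, huv⟩
    obtain ⟨i, hi⟩ := Language.mem_iSup.1 hv
    exact Language.mem_iSup.2 ⟨i, u, hu, v, hi, huv⟩
  · intro hw
    obtain ⟨i, u, hu, v, hv, huv⟩ := Language.mem_iSup.1 hw
    exact ⟨u, hu, v, Language.mem_iSup.2 ⟨i, hv⟩, huv⟩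

theorem matchIter_sup_succ {sc fl : Language (DLetter S)} (hsc : matchLang sc sc = ⊥) (i : ℕ) :
    matchIter (sc ⊔ fl) (i + 1) = matchIter fl (i + 1) ⊔ matchLang sc (matchIter fl i) := by
  induction i with
  | zero =>
    simp only [matchIter, matchLang_sup_left, matchLang_sup_right, hsc, bot_sup_eq,
      matchLang_comm fl sc, sup_left_idem, sup_comm]
  | succ i ih =>
    have hscsc : matchLang (matchLang sc (matchIter fl i)) sc = ⊥ := by
      rw [matchLang_comm sc, matchLang_assoc, hsc, matchLang_comm, matchLang_bot_left]
    rw [matchIter, ih, matchLang_sup_left, matchLang_sup_right, matchLang_sup_right, hscsc,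
      bot_sup_eq, matchLang_assoc, matchLang_comm _ sc]
    change _ ⊔ _ ⊔ matchLang sc (matchIter fl (i + 1)) = _
    rw [sup_right_comm, sup_idem, sup_comm]
    rfl

theorem matchClosure_sup {sc fl : Language (DLetter S)} (hsc : matchLang sc sc = ⊥) :
    matchClosure (sc ⊔ fl) = sc ⊔ matchLang sc (matchClosure fl) ⊔ matchClosure fl := by
  rw [matchClosure, ← sup_iSup_nat_succ]
  simp only [matchIter_sup_succ hsc, iSup_sup_eq, ← matchLang_iSup_right]
  rw [matchClosure, ← sup_iSup_nat_succ (matchIter fl)]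
  change sc ⊔ fl ⊔ _ = _
  ac_rfl

/-- if `B` is in decomposed form with scaffold `sc` and fill `fl`, then
`C(B) = (sc ∪ (sc @ fl^@)) ∩ Σ*`. -/
theorem cons_of_decomposed_base (B sc fl : Language (DLetter S))
    (h : IsDecomposed B sc fl) :
    Cons B = { w : List S | undotWord w ∈ sc ⊔ matchLang sc (matchClosure fl) } := by
  obtain ⟨-, rfl, -, hfl, hsc⟩ := h
  ext w
  have hw : undotWord w ∉ matchClosure fl := fun hw => (hfl ▸ hw : w ∈ (⊥ : Language S))
  change undotWord w ∈ matchClosure (sc ⊔ fl) ↔ _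
  rw [matchClosure_sup hsc]
  exact or_iff_left hw

end Consensual
end

section
/- If B' and B'' are bases in decomposed form that are concatenable, then C(B')·C(B'') = C(B' ⊙ B''), where B' ⊙ B'' is the dot-product of B' and B''. -/
/-!
A word of `C(B)` is the match of finitely many base words, and a match can be read column by
column: all words spell the same letters, and each undotted position is undotted in exactly one
of them. In a decomposed base exactly one of these words comes from the scaffold, since the fill
is unproductive and two scaffold words never match. For `w₁ ∈ C(B')`, `w₂ ∈ C(B'')` with
scaffold words `y₁`, `y₂` and fill words `F`, `G`, the family `y₁y₂`, `f·dot(y₂)` (`f ∈ F`),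
`dot(y₁)·g` (`g ∈ G`) matches to `w₁w₂`, and concatenability puts the padded fill words in
`fl' ∪ fl''`. Conversely, concatenability says that every fill word of `B' ⊙ B''` matching the
scaffold word `y₁y₂` has one of these padded shapes, so the family splits back into two.
-/

theorem List.exists_perm_map_append_map {α β γ : Type*} {f : β → α} {g : γ → α}
    {p : β → Prop} {q : γ → Prop} {l : List α}
    (h : ∀ z ∈ l, (∃ a, p a ∧ f a = z) ∨ (∃ b, q b ∧ g b = z)) :
    ∃ (F : List β) (G : List γ), (∀ a ∈ F, p a) ∧ (∀ b ∈ G, q b) ∧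
      l.Perm (F.map f ++ G.map g) := by
  induction l with
  | nil => exact ⟨[], [], by simp, by simp, by simp⟩
  | cons z l ih =>
    obtain ⟨F, G, hF, hG, hl⟩ := ih fun z hz => h z (List.mem_cons_of_mem _ hz)
    rcases h z List.mem_cons_self with ⟨a, ha, rfl⟩ | ⟨b, hb, rfl⟩
    · exact ⟨a :: F, G, List.forall_mem_cons.mpr ⟨ha, hF⟩, hG, hl.cons _⟩
    · exact ⟨F, b :: G, hF, List.forall_mem_cons.mpr ⟨hb, hG⟩,
        (hl.cons _).trans List.perm_middle.symm⟩

namespace Consensual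

variable {S : Type}

def undotAt (x : List (DLetter S)) (i : ℕ) : Bool := x[i]?.any (fun l => !l.2)

theorem undotAt_append (x y : List (DLetter S)) (i : ℕ) :
    undotAt (x ++ y) i = if i < x.length then undotAt x i else undotAt y (i - x.length) := by
  unfold undotAt
  rw [List.getElem?_append]
  split_ifs <;> rfl

theorem undotAt_of_length_le {x : List (DLetter S)} {i : ℕ} (h : x.length ≤ i) :
    undotAt x i = false := by
  simp [undotAt, List.getElem?_eq_none h]

@[simp]
theorem undotAt_dotWord (x : List (DLetter S)) (i : ℕ) : undotAt (dotWord x) i = false := by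
  cases h : x[i]? <;> simp [undotAt, dotWord, h]

@[simp]
theorem length_dotWord (x : List (DLetter S)) : (dotWord x).length = x.length :=
  List.length_map _

@[simp]
theorem dotWord_dotWord (x : List (DLetter S)) : dotWord (dotWord x) = dotWord x := by
  simp [dotWord]

theorem dotWord_append (x y : List (DLetter S)) : dotWord (x ++ y) = dotWord x ++ dotWord y :=
  List.map_append

theorem undotWord_append (w w' : List S) : undotWord (w ++ w') = undotWord w ++ undotWord w' :=
  List.map_append

theorem length_eq_of_dotWord_eq {x y : List (DLetter S)} (h : dotWord x = dotWord y) :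
    x.length = y.length := by
  simpa using congrArg List.length h

theorem eq_of_dotWord_eq_of_undotAt_eq {x y : List (DLetter S)} (h : dotWord x = dotWord y)
    (h' : ∀ i, undotAt x i = undotAt y i) : x = y := by
  refine List.ext_getElem? fun i => ?_
  have hi := congrArg (·[i]?) h
  have hi' := h' i
  simp only [dotWord, List.getElem?_map, undotAt] at hi hi'
  cases hx : x[i]? <;> cases hy : y[i]? <;> simp_all [Prod.ext_iff]

/-- `u = x₁ @ ⋯ @ xₙ` for `xs = [x₁, …, xₙ]`, in a form independent of the order and the
bracketing of the matches. -/
def IsMatchOf (xs : List (List (DLetter S))) (u : List (DLetter S)) : Prop :=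
  (∀ x ∈ xs, dotWord x = dotWord u) ∧
    ∀ i, xs.countP (undotAt · i) = if undotAt u i then 1 else 0

namespace IsMatchOf

variable {xs ys : List (List (DLetter S))} {x u : List (DLetter S)}

theorem perm (h : IsMatchOf xs u) (hp : xs.Perm ys) : IsMatchOf ys u :=
  ⟨fun x hx => h.1 x (hp.mem_iff.mpr hx), fun i => (hp.countP_eq _).symm.trans (h.2 i)⟩

theorem _root_.List.Perm.isMatchOf_iff (hp : xs.Perm ys) : IsMatchOf xs u ↔ IsMatchOf ys u :=
  ⟨fun h => h.perm hp, fun h => h.perm hp.symm⟩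

theorem length_eq (h : IsMatchOf xs u) (hx : x ∈ xs) : x.length = u.length :=
  length_eq_of_dotWord_eq (h.1 x hx)

end IsMatchOf

theorem isMatchOf_singleton {x u : List (DLetter S)} : IsMatchOf [x] u ↔ x = u := by
  refine ⟨fun ⟨hd, hc⟩ => eq_of_dotWord_eq_of_undotAt_eq (hd x (by simp)) fun i => ?_, ?_⟩
  · have := hc i
    simp only [List.countP_singleton] at this
    revert this
    cases undotAt x i <;> cases undotAt u i <;> simp
  · rintro rfl
    exact ⟨by simp, fun i => by simp [List.countP_singleton]⟩

theorem isMatchOf_map_append_iff {ps : List (List (DLetter S) × List (DLetter S))}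
    {u v : List (DLetter S)} (hps : ∀ p ∈ ps, p.1.length = u.length) :
    IsMatchOf (ps.map fun p => p.1 ++ p.2) (u ++ v) ↔
      IsMatchOf (ps.map Prod.fst) u ∧ IsMatchOf (ps.map Prod.snd) v := by
  have hdot : ∀ p ∈ ps, dotWord (p.1 ++ p.2) = dotWord (u ++ v) ↔
      dotWord p.1 = dotWord u ∧ dotWord p.2 = dotWord v := fun p hp => by
    rw [dotWord_append, dotWord_append]
    exact ⟨fun h => List.append_inj h (by simp [hps p hp]), fun ⟨h1, h2⟩ => h1 ▸ h2 ▸ rfl⟩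
  have hcount : ∀ i, (ps.map fun p => p.1 ++ p.2).countP (undotAt · i) =
      if i < u.length then (ps.map Prod.fst).countP (undotAt · i)
      else (ps.map Prod.snd).countP (undotAt · (i - u.length)) := fun i => by
    simp only [List.countP_map]
    split_ifs with hi <;> refine List.countP_congr fun p hp => ?_ <;>
      simp [undotAt_append, hps p hp, hi]
  have hfst : ∀ i, u.length ≤ i → (ps.map Prod.fst).countP (undotAt · i) = 0 := fun i hi => by
    simp only [List.countP_map, List.countP_eq_zero]
    exact fun p hp => by simp [undotAt_of_length_le ((hps p hp).trans_le hi)]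
  simp only [IsMatchOf, List.forall_mem_map]
  constructor
  · rintro ⟨hd, hc⟩
    refine ⟨⟨fun p hp => ((hdot p hp).1 (hd p hp)).1, fun i => ?_⟩,
      ⟨fun p hp => ((hdot p hp).1 (hd p hp)).2, fun j => ?_⟩⟩
    · by_cases hi : i < u.length
      · simpa [hcount, undotAt_append, hi] using hc i
      · simp [hfst i (by omega), undotAt_of_length_le (not_lt.mp hi)]
    · simpa [hcount, undotAt_append] using hc (u.length + j)
  · rintro ⟨⟨hd1, hc1⟩, ⟨hd2, hc2⟩⟩
    refine ⟨fun p hp => (hdot p hp).2 ⟨hd1 p hp, hd2 p hp⟩, fun i => ?_⟩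
    by_cases hi : i < u.length
    · rw [hcount, undotAt_append, if_pos hi, if_pos hi, hc1]
    · rw [hcount, undotAt_append, if_neg hi, if_neg hi, hc2]

theorem isMatchOf_append_dotWord_iff {xs ds : List (List (DLetter S))} {x u : List (DLetter S)}
    (hx : x ∈ xs) (hds : ∀ d ∈ ds, d = dotWord x) :
    IsMatchOf (xs ++ ds) u ↔ IsMatchOf xs u := by
  have hcount : ∀ i, ds.countP (undotAt · i) = 0 := fun i =>
    List.countP_eq_zero.mpr fun d hd => by simp [hds d hd]
  simp only [IsMatchOf, List.forall_mem_append, List.countP_append, hcount, add_zero]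
  refine ⟨fun h => h.imp_left And.left, fun ⟨hd, hc⟩ => ⟨⟨hd, fun d hd' => ?_⟩, hc⟩⟩
  rw [hds d hd', dotWord_dotWord, hd x hx]

theorem isMatchOf_concat_iff {y z w : List (DLetter S)} {F G : List (List (DLetter S))} :
    IsMatchOf ((y ++ z) :: (F.map (· ++ dotWord z) ++ G.map (dotWord y ++ ·))) w ↔
      ∃ u v, w = u ++ v ∧ IsMatchOf (y :: F) u ∧ IsMatchOf (z :: G) v := by
  set ps := (y, z) :: (F.map (fun f => (f, dotWord z)) ++ G.map (fun g => (dotWord y, g)))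
  have hps : ps.map (fun p => p.1 ++ p.2) =
      (y ++ z) :: (F.map (· ++ dotWord z) ++ G.map (dotWord y ++ ·)) := by
    simp [ps, Function.comp_def]
  have key : ∀ u v, y.length = u.length → (∀ f ∈ F, f.length = u.length) →
      (IsMatchOf (ps.map fun p => p.1 ++ p.2) (u ++ v) ↔
        IsMatchOf (y :: F) u ∧ IsMatchOf (z :: G) v) := fun u v hy hF => by
    have hsnd : (ps.map Prod.snd).Perm ((z :: G) ++ F.map fun _ => dotWord z) := by
      simpa [ps, Function.comp_def] using (List.perm_append_comm).cons z
    have hlen : ∀ p ∈ ps, p.1.length = u.length := by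
      simp only [ps, List.forall_mem_cons, List.forall_mem_append, List.forall_mem_map]
      exact ⟨hy, hF, fun _ _ => by simp [hy]⟩
    have hfst : ps.map Prod.fst = (y :: F) ++ G.map fun _ => dotWord y := by
      simp [ps, Function.comp_def]
    rw [isMatchOf_map_append_iff hlen, hsnd.isMatchOf_iff, hfst,
      isMatchOf_append_dotWord_iff (x := y) List.mem_cons_self (by simp),
      isMatchOf_append_dotWord_iff (x := z) List.mem_cons_self (by simp)]
  rw [← hps]
  constructor
  · intro h
    have hlen : ∀ x ∈ ps, (x.1 ++ x.2).length = w.length := fun x hx =>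
      h.length_eq (List.mem_map_of_mem hx)
    have hyz := hlen (y, z) (by simp [ps])
    simp only [List.length_append] at hyz
    refine ⟨w.take y.length, w.drop y.length, (List.take_append_drop _ _).symm,
      (key _ _ (by simp only [List.length_take]; omega) fun f hf => ?_).mp
        (by rwa [List.take_append_drop])⟩
    have hfz := hlen (f, dotWord z) (by simp [ps, hf])
    simp only [List.length_append, length_dotWord] at hfz
    simp only [List.length_take]
    omega
  · rintro ⟨u, v, rfl, h₁, h₂⟩
    exact (key u v (h₁.length_eq (List.mem_cons_self ..))
      fun f hf => h₁.length_eq (List.mem_cons_of_mem _ hf)).mpr ⟨h₁, h₂⟩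

section Match

variable [DecidableEq S]

theorem matchLetter_eq_some_iff {a b c : DLetter S} :
    matchLetter a b = some c ↔ IsMatchOf [[a], [b]] [c] := by
  have hcount : (∀ i, [[a], [b]].countP (undotAt · i) = if undotAt [c] i then 1 else 0) ↔
      [[a], [b]].countP (undotAt · 0) = if undotAt [c] 0 then 1 else 0 := by
    refine ⟨fun h => h 0, fun h i => ?_⟩
    cases i with
    | zero => exact h
    | succ i => simp [undotAt]
  rw [IsMatchOf, hcount]
  obtain ⟨a, _ | _⟩ := a <;> obtain ⟨b, _ | _⟩ := b <;> obtain ⟨c, _ | _⟩ := c <;>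
    simp [matchLetter, dotWord, undotAt] <;> grind

theorem matchWord_eq_some_iff {x y u : List (DLetter S)} :
    matchWord x y = some u ↔ IsMatchOf [x, y] u := by
  induction x generalizing y u with
  | nil =>
    cases y with
    | nil =>
      refine ⟨fun h => ?_, fun h => ?_⟩
      · obtain rfl : u = [] := by simpa [matchWord] using h.symm
        exact ⟨by simp, fun i => by simp [undotAt]⟩
      · simpa [matchWord] using (h.length_eq (x := []) (by simp)).symm
    | cons b y =>
      refine ⟨fun h => by simp [matchWord] at h, fun h => ?_⟩
      simpa using (h.length_eq (x := []) (by simp)).trans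
        (h.length_eq (x := b :: y) (by simp)).symm
  | cons a x ih =>
    cases y with
    | nil =>
      refine ⟨fun h => by simp [matchWord] at h, fun h => ?_⟩
      simpa using (h.length_eq (x := []) (by simp)).trans
        (h.length_eq (x := a :: x) (by simp)).symm
    | cons b y =>
      cases u with
      | nil =>
        refine ⟨fun h => ?_, fun h => ?_⟩
        · simp [matchWord, Option.bind_eq_some_iff] at h
        · simpa using h.length_eq (x := a :: x) (by simp)
      | cons c u =>
        have := isMatchOf_map_append_iff (ps := [([a], x), ([b], y)]) (u := [c]) (v := u)
          (by simp)
        simp only [List.map_cons, List.map_nil, List.singleton_append] at this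
        rw [this, ← matchLetter_eq_some_iff, ← ih]
        simp [matchWord, Option.bind_eq_some_iff]

theorem isMatchOf_cons_iff {x u : List (DLetter S)} {xs : List (List (DLetter S))} :
    IsMatchOf (x :: xs) u ↔ ∃ v, IsMatchOf xs v ∧ matchWord v x = some u := by
  simp only [matchWord_eq_some_iff]
  constructor
  · rintro ⟨hd, hc⟩
    have hlen : x.length = u.length := length_eq_of_dotWord_eq (hd x (by simp))
    -- the match of `xs`: `u` with the undotted positions of `x` dotted
    set v := List.zipWith (fun l c => (l.1, l.2 || !c.2)) u x
    have hvd : dotWord v = dotWord u := by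
      refine List.ext_getElem (by simp [v, hlen]) fun i h₁ h₂ => ?_
      simp [v, dotWord]
    have hvu : ∀ i, undotAt v i = (undotAt u i && !undotAt x i) := fun i => by
      rcases lt_or_ge i u.length with hi | hi
      · simp [v, undotAt, List.getElem?_zipWith, List.getElem?_eq_getElem hi,
          List.getElem?_eq_getElem (hlen ▸ hi)]
      · rw [undotAt_of_length_le (by simpa [v, hlen] using hi), undotAt_of_length_le hi,
          Bool.false_and]
    refine ⟨v, ⟨fun y hy => (hd y (by simp [hy])).trans hvd.symm, fun i => ?_⟩,
      ⟨by simpa [hvd] using hd x (by simp), fun i => ?_⟩⟩ <;>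
    · have := hc i
      rw [List.countP_cons] at this
      simp only [List.countP_cons, List.countP_nil, hvu]
      revert this
      cases undotAt u i <;> cases undotAt x i <;> simp
  · rintro ⟨v, ⟨hd, hc⟩, ⟨hd₂, hc₂⟩⟩
    refine ⟨fun y hy => ?_, fun i => ?_⟩
    · obtain rfl | hy := List.mem_cons.mp hy
      exacts [hd₂ y (by simp), (hd y hy).trans (hd₂ v (by simp))]
    · rw [List.countP_cons, hc, ← hc₂]
      simp [List.countP_cons, add_comm]

theorem IsMatchOf.exists_of_append {xs ys : List (List (DLetter S))} {u : List (DLetter S)}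
    (h : IsMatchOf (xs ++ ys) u) : ∃ v, IsMatchOf ys v := by
  induction xs generalizing u with
  | nil => exact ⟨u, h⟩
  | cons x xs ih =>
    obtain ⟨v, hv, -⟩ := isMatchOf_cons_iff.mp h
    exact ih hv

theorem IsMatchOf.isSome_matchWord {x y u : List (DLetter S)} {xs : List (List (DLetter S))}
    (h : IsMatchOf (y :: xs) u) (hx : x ∈ xs) : (matchWord x y).isSome := by
  have hp : (y :: xs).Perm (xs.erase x ++ [x, y]) :=
    (((List.perm_cons_erase hx).cons y).trans (.swap x y _)).trans
      (List.perm_append_comm (l₁ := [x, y]))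
  obtain ⟨v, hv⟩ := (h.perm hp).exists_of_append
  simp [matchWord_eq_some_iff.mpr hv]

theorem mem_matchIter_iff {B : Language (DLetter S)} {n : ℕ} {u : List (DLetter S)} :
    u ∈ matchIter B n ↔
      ∃ xs : List _, xs.length = n + 1 ∧ (∀ x ∈ xs, x ∈ B) ∧ IsMatchOf xs u := by
  induction n generalizing u with
  | zero =>
    constructor
    · exact fun h => ⟨[u], rfl, by simpa [matchIter] using h, isMatchOf_singleton.mpr rfl⟩
    · rintro ⟨xs, hlen, hB, h⟩
      obtain ⟨x, rfl⟩ := List.length_eq_one_iff.mp hlen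
      exact isMatchOf_singleton.mp h ▸ hB x (by simp)
  | succ n ih =>
    constructor
    · rintro ⟨v, hv, x, hx, hvx⟩
      obtain ⟨xs, hlen, hB, h⟩ := ih.mp hv
      exact ⟨x :: xs, by simp [hlen], List.forall_mem_cons.mpr ⟨hx, hB⟩,
        isMatchOf_cons_iff.mpr ⟨v, h, hvx⟩⟩
    · rintro ⟨_ | ⟨x, xs⟩, hlen, hB, h⟩
      · simp at hlen
      obtain ⟨v, hv, hvx⟩ := isMatchOf_cons_iff.mp h
      exact ⟨v, ih.mpr ⟨xs, by simpa using hlen, fun y hy => hB y (by simp [hy]), hv⟩,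
        x, hB x (by simp), hvx⟩

theorem mem_Cons_iff {B : Language (DLetter S)} {w : List S} :
    w ∈ Cons B ↔ ∃ xs, xs ≠ [] ∧ (∀ x ∈ xs, x ∈ B) ∧ IsMatchOf xs (undotWord w) := by
  simp only [Cons, matchClosure, Language.mem_iSup, mem_matchIter_iff]
  constructor
  · rintro ⟨n, xs, hlen, hB, h⟩
    exact ⟨xs, List.ne_nil_of_length_pos (by omega), hB, h⟩
  · rintro ⟨xs, hne, hB, h⟩
    exact ⟨xs.length - 1, xs, by have := List.length_pos_iff.mpr hne; omega, hB, h⟩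

theorem ne_nil_of_matchLang_self_eq_bot {sc : Language (DLetter S)} (hsc : matchLang sc sc = ⊥)
    {y : List (DLetter S)} (hy : y ∈ sc) : y ≠ [] := by
  rintro rfl
  have : [] ∈ matchLang sc sc := ⟨[], hy, [], hy, rfl⟩
  rwa [hsc] at this

theorem IsDecomposed.exists_isMatchOf_cons {B sc fl : Language (DLetter S)}
    (hB : IsDecomposed B sc fl) {w : List S} (hw : w ∈ Cons B) :
    ∃ y ∈ sc, ∃ F : List (List (DLetter S)), (∀ f ∈ F, f ∈ fl) ∧
      IsMatchOf (y :: F) (undotWord w) := by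
  obtain ⟨-, rfl, -, hfl, hsc⟩ := hB
  obtain ⟨xs, hne, hxs, h⟩ := mem_Cons_iff.mp hw
  obtain ⟨y, hy, hysc⟩ : ∃ y ∈ xs, y ∈ sc := by
    by_contra! hno
    have : w ∈ Cons fl :=
      mem_Cons_iff.mpr ⟨xs, hne, fun x hx => (hxs x hx).resolve_left (hno x hx), h⟩
    rwa [hfl] at this
  have h' := (List.perm_cons_erase hy).isMatchOf_iff.mp h
  refine ⟨y, hysc, xs.erase y, fun f hf => ?_, h'⟩
  refine (hxs f (List.mem_of_mem_erase hf)).resolve_left fun hfsc => ?_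
  obtain ⟨v, hv⟩ := Option.isSome_iff_exists.mp (h'.isSome_matchWord hf)
  have : v ∈ matchLang sc sc := ⟨f, hfsc, y, hysc, hv⟩
  rwa [hsc] at this

section Concat

variable {sc' fl' sc'' fl'' : Language (DLetter S)}

theorem cons_mul_cons_le_cons_dotProduct (h' : IsDecomposed (sc' ⊔ fl') sc' fl')
    (h'' : IsDecomposed (sc'' ⊔ fl'') sc'' fl'') (hc : Concatenable sc' fl' sc'' fl'') :
    Cons (sc' ⊔ fl') * Cons (sc'' ⊔ fl'') ≤ Cons (dotProduct sc' fl' sc'' fl'') := by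
  rintro _ ⟨w₁, hw₁, w₂, hw₂, rfl⟩
  beta_reduce
  obtain ⟨y₁, hy₁, F, hF, h₁⟩ := h'.exists_isMatchOf_cons hw₁
  obtain ⟨y₂, hy₂, G, hG, h₂⟩ := h''.exists_isMatchOf_cons hw₂
  have hne₁ := ne_nil_of_matchLang_self_eq_bot h'.2.2.2.2 hy₁
  have hne₂ := ne_nil_of_matchLang_self_eq_bot h''.2.2.2.2 hy₂
  refine mem_Cons_iff.mpr ⟨_, List.cons_ne_nil _ _, ?_,
    (undotWord_append w₁ w₂).symm ▸ isMatchOf_concat_iff.mpr ⟨_, _, rfl, h₁, h₂⟩⟩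
  simp only [List.forall_mem_cons, List.forall_mem_append, List.forall_mem_map]
  refine ⟨.inl (.inl ⟨y₁, hy₁, y₂, hy₂, rfl⟩), fun f hf => .inl (.inr ?_), fun g hg => .inr ?_⟩
  · exact ((hc.2.1 _ (by simp [hne₂, dotWord]) y₁ hy₁ y₂ hy₂).mp
      ⟨f, hF f hf, rfl, h₁.isSome_matchWord hf⟩).1
  · exact ((hc.2.2 _ (by simp [hne₁, dotWord]) y₁ hy₁ y₂ hy₂).mp
      ⟨g, hG g hg, rfl, h₂.isSome_matchWord hg⟩).1

theorem cons_dotProduct_le_cons_mul_cons (hc : Concatenable sc' fl' sc'' fl'') :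
    Cons (dotProduct sc' fl' sc'' fl'') ≤ Cons (sc' ⊔ fl') * Cons (sc'' ⊔ fl'') := by
  intro w hw
  obtain ⟨_, ⟨y₁, hy₁, y₂, hy₂, rfl⟩, R, hR, h⟩ := hc.1.exists_isMatchOf_cons hw
  beta_reduce at h
  have hne : y₁ ++ y₂ ≠ [] :=
    ne_nil_of_matchLang_self_eq_bot hc.1.2.2.2.2 ⟨y₁, hy₁, y₂, hy₂, rfl⟩
  have hsplit : ∀ z ∈ R, (∃ f, f ∈ fl' ∧ f ++ dotWord y₂ = z) ∨
      (∃ g, g ∈ fl'' ∧ dotWord y₁ ++ g = z) := by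
    intro z hz
    have hz₀ : z ≠ [] := fun h₀ => hne (List.eq_nil_of_length_eq_zero <| by
      rw [h.length_eq List.mem_cons_self, ← h.length_eq (List.mem_cons_of_mem _ hz), h₀,
        List.length_nil])
    rcases hR z hz with hz' | hz''
    · obtain ⟨f, hf, rfl, -⟩ := (hc.2.1 z hz₀ y₁ hy₁ y₂ hy₂).mpr ⟨hz', h.isSome_matchWord hz⟩
      exact .inl ⟨f, hf, rfl⟩
    · obtain ⟨g, hg, rfl, -⟩ := (hc.2.2 z hz₀ y₁ hy₁ y₂ hy₂).mpr ⟨hz'', h.isSome_matchWord hz⟩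
      exact .inr ⟨g, hg, rfl⟩
  obtain ⟨F, G, hF, hG, hR⟩ := List.exists_perm_map_append_map hsplit
  obtain ⟨u, v, huv, h₁, h₂⟩ := isMatchOf_concat_iff.mp ((hR.cons _).isMatchOf_iff.mp h)
  obtain ⟨w₁, w₂, rfl, rfl, rfl⟩ := List.map_eq_append_iff.mp huv
  exact ⟨w₁, mem_Cons_iff.mpr ⟨y₁ :: F, List.cons_ne_nil _ _,
      List.forall_mem_cons.mpr ⟨.inl hy₁, fun f hf => .inr (hF f hf)⟩, h₁⟩,
    w₂, mem_Cons_iff.mpr ⟨y₂ :: G, List.cons_ne_nil _ _,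
      List.forall_mem_cons.mpr ⟨.inl hy₂, fun g hg => .inr (hG g hg)⟩, h₂⟩, rfl⟩

end Concat

/-- if `B' = sc' ∪ fl'` and `B'' = sc'' ∪ fl''` are decomposed bases that
are concatenable, then `C(B')·C(B'') = C(B' ⊙ B'')`. -/
theorem cons_concat_of_concatenable (sc' fl' sc'' fl'' : Language (DLetter S))
    (h' : IsDecomposed (sc' ⊔ fl') sc' fl')
    (h'' : IsDecomposed (sc'' ⊔ fl'') sc'' fl'')
    (hc : Concatenable sc' fl' sc'' fl'') :
    Cons (sc' ⊔ fl') * Cons (sc'' ⊔ fl'') = Cons (dotProduct sc' fl' sc'' fl'') :=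
  le_antisymm (cons_mul_cons_le_cons_dotProduct h' h'' hc) (cons_dotProduct_le_cons_mul_cons hc)

end Match

end Consensual
end

section
/- Let m ≥ 4 be an even module and let R and R̂ be nonempty sets of slots of module m. If s ∈ sc_{R,m}, f ∈ fl_{R̂,m}, and the match s @ f is defined, then: (i) R ∩ R̂ ≠ ∅, and (ii) for every a ∈ Σ, every restarting point of π_ã(f) is also a restarting point of π_ã(s). -/
namespace Consensual

variable {S : Type} [DecidableEq S]

/-!
In the `a`-projection, a scaffold word is a concatenation of blocks `å a^{r-1} å a^{m-r-1}`
(`r ∈ R`) and single letters `a`. Since slots are smaller than `m/2`, two dotted letters at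
distance `k ≤ m/2 - 1` can only be the two dots of one block, which then has slot `k ∈ R`.
A restarting point of `π_ã(f)` with slot `r̂` carries undotted letters at offsets `0` and `r̂`;
as the match is defined (also after projecting), `π_ã(s)` has dotted letters there, so a block of
slot `r̂` of the scaffold starts at the same point. For (i), a fill word is not all-dotted, so its
switch back to the scaffold has a dotted letter, hence a block, which gives a restarting point.
-/

omit [DecidableEq S] in
theorem slotWord_length {m r : ℕ} (hr : 1 ≤ r) (hrm : r < m) (a : S) :
    (slotWord m r a).length = m := by
  simp [slotWord]; omega

omit [DecidableEq S] in
theorem slotWord_getElem? {m r : ℕ} (hr : 1 ≤ r) (hrm : r < m) (a : S) (j : ℕ) :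
    (slotWord m r a)[j]? = if j < m then some (a, decide (j = 0 ∨ j = r)) else none := by
  rcases j with _ | j
  · simp [slotWord]; omega
  · simp only [slotWord, List.getElem?_cons_succ, List.getElem?_append, List.length_replicate,
      List.getElem?_replicate, List.getElem?_cons]
    split_ifs <;> simp_all <;> omega

omit [DecidableEq S] in
theorem slot_of_dotted_pair_of_mem_kstar {m : ℕ} {R : Set ℕ} {a : S}
    (hR : ∀ r ∈ R, 1 ≤ r ∧ r ≤ m / 2 - 1) {w : List (DLetter S)}
    (hw : w ∈ KStar.kstar (Rm m R a ⊔ {[(a, false)]})) {d k : ℕ} (hk : 1 ≤ k)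
    (hkm : k ≤ m / 2 - 1) (hd : w[d]? = some (a, true)) (hdk : w[d + k]? = some (a, true)) :
    k ∈ R ∧ (w.drop d).take m = slotWord m k a := by
  obtain ⟨L, rfl, hL⟩ := Language.mem_kstar.mp hw
  clear hw
  induction L generalizing d with
  | nil => simp at hd
  | cons b L ih =>
    simp only [List.flatten_cons] at hd hdk ⊢
    by_cases hdb : d < b.length
    · rcases hL b List.mem_cons_self with ⟨r, hr, rfl⟩ | hb
      · obtain ⟨hr1, hr2⟩ := hR r hr
        have hrm : r < m := by omega
        have hlen := slotWord_length hr1 hrm a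
        have dots : ∀ j < m, (slotWord m r a ++ L.flatten)[j]? = some (a, true) →
            j = 0 ∨ j = r := by
          intro j hj h
          rw [List.getElem?_append_left (by rw [hlen]; exact hj), slotWord_getElem? hr1 hrm, if_pos hj] at h
          simpa using h
        obtain ⟨rfl, rfl⟩ : d = 0 ∧ k = r := by
          have := dots d (by omega) hd
          have := dots (d + k) (by omega) hdk
          omega
        simp [hr, hlen]
      · obtain rfl : b = [(a, false)] := hb
        obtain rfl : d = 0 := by simpa using hdb
        simp at hd
    · obtain ⟨d, rfl⟩ := Nat.exists_eq_add_of_le (not_lt.mp hdb)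
      rw [add_assoc] at hdk
      simp only [List.getElem?_append_right (Nat.le_add_right _ _), Nat.add_sub_cancel_left,
        List.drop_append, List.drop_eq_nil_of_le (Nat.le_add_right _ _), List.nil_append]
        at hd hdk ⊢
      exact ih (fun c hc => hL c (List.mem_cons_of_mem _ hc)) hd hdk

omit [DecidableEq S] in
theorem exists_slotWord_infix_of_dotted_mem_kstar {m : ℕ} {R : Set ℕ} {a : S}
    {w : List (DLetter S)} (hw : w ∈ KStar.kstar (Rm m R a ⊔ {[(a, false)]}))
    (hdot : (a, true) ∈ w) : ∃ r ∈ R, slotWord m r a <:+: w := by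
  obtain ⟨L, rfl, hL⟩ := Language.mem_kstar.mp hw
  obtain ⟨b, hbL, hab⟩ := List.mem_flatten.mp hdot
  rcases hL b hbL with ⟨r, hr, rfl⟩ | hb
  · exact ⟨r, hr, List.infix_of_mem_flatten hbL⟩
  · obtain rfl : b = [(a, false)] := hb
    simp at hab

theorem matchLetter_isSome_iff {p q : DLetter S} :
    (matchLetter p q).isSome ↔ p.1 = q.1 ∧ (p.2 ∨ q.2) := by
  unfold matchLetter; split_ifs with h <;> simp [h]

theorem matchWord_isSome_iff {x y : List (DLetter S)} :
    (matchWord x y).isSome ↔ List.Forall₂ (fun p q => (matchLetter p q).isSome) x y := by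
  induction x generalizing y with
  | nil => cases y <;> simp [matchWord]
  | cons p x ih =>
    cases y with
    | nil => simp [matchWord]
    | cons q y =>
      rw [List.forall₂_cons, ← ih]
      cases hp : matchLetter p q <;> cases hx : matchWord x y <;> simp [matchWord, hp, hx]

theorem matchWord_projA_isSome {x y : List (DLetter S)} (a : S) (h : (matchWord x y).isSome) :
    (matchWord (projA a x) (projA a y)).isSome := by
  rw [matchWord_isSome_iff] at h ⊢
  refine List.rel_filter (fun p q hpq => ?_) h
  simp [(matchLetter_isSome_iff.mp hpq).1]

theorem getElem?_eq_dotted_of_matchWord_isSome {x y : List (DLetter S)}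
    (h : (matchWord x y).isSome) {j : ℕ} {b : S} (hy : y[j]? = some (b, false)) :
    x[j]? = some (b, true) := by
  rw [matchWord_isSome_iff] at h
  induction h generalizing j with
  | nil => simp at hy
  | @cons p q x y hpq _ ih =>
    cases j with
    | zero =>
      simp only [List.getElem?_cons_zero, Option.some.injEq] at hy ⊢
      subst hy
      obtain ⟨h1, h2⟩ := matchLetter_isSome_iff.mp hpq
      simp_all [Prod.ext_iff]
    | succ j => exact ih hy

theorem projA_switchWord (a : S) (u : List (DLetter S)) :
    projA a (switchWord u) = switchWord (projA a u) := by
  simp [projA, switchWord, List.filter_map, Function.comp_def]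

theorem exists_switchWord_slotWord_factor_of_mem_fill {m : ℕ} {R : Set ℕ}
    (hR : ∀ r ∈ R, 1 ≤ r ∧ r < m) {f : List (DLetter S)} (hf : f ∈ fill m R) :
    ∃ a d, ∃ r ∈ R, ((projA a f).drop d).take m = switchWord (slotWord m r a) := by
  obtain ⟨⟨u, hu, rfl⟩, hnd⟩ := hf
  obtain ⟨a, ha⟩ : ∃ a, (a, true) ∈ u := by
    by_contra! h
    exact hnd fun l hl => by
      obtain ⟨⟨b, c⟩, hbc, rfl⟩ := List.mem_map.mp hl
      cases c <;> simp_all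
  obtain ⟨r, hr, p, q, hpq⟩ :=
    exists_slotWord_infix_of_dotted_mem_kstar (hu a) (List.mem_filter.mpr ⟨ha, by simp⟩)
  refine ⟨a, p.length, r, hr, ?_⟩
  rw [projA_switchWord, ← hpq]
  simp [switchWord, slotWord_length (hR r hr).1 (hR r hr).2]

theorem slot_mem_and_factor_eq_of_matchWord_isSome {m : ℕ} {R : Set ℕ} {a : S}
    (hR : ∀ r ∈ R, 1 ≤ r ∧ r ≤ m / 2 - 1) {x y : List (DLetter S)}
    (hx : x ∈ KStar.kstar (Rm m R a ⊔ {[(a, false)]})) (hxy : (matchWord x y).isSome)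
    {d r : ℕ} (hr : 1 ≤ r ∧ r ≤ m / 2 - 1)
    (hy : (y.drop d).take m = switchWord (slotWord m r a)) :
    r ∈ R ∧ (x.drop d).take m = slotWord m r a := by
  have hrm : r < m := by omega
  have dotted : ∀ j, j = 0 ∨ j = r → x[d + j]? = some (a, true) := by
    intro j hj
    have hjm : j < m := by omega
    refine getElem?_eq_dotted_of_matchWord_isSome hxy ?_
    rw [← List.getElem?_drop, ← List.getElem?_take_of_lt hjm, hy]
    simp [switchWord, slotWord_getElem? hr.1 hrm, hjm, hj]
  exact slot_of_dotted_pair_of_mem_kstar hR hx hr.1 hr.2 (dotted 0 (Or.inl rfl))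
    (dotted r (Or.inr rfl))

theorem match_scaffold_fill_restart_points_general (m : ℕ) (R Rh : Set ℕ)
    (hslots : ∀ r ∈ R, 1 ≤ r ∧ r ≤ m / 2 - 1)
    (hslotsh : ∀ r ∈ Rh, 1 ≤ r ∧ r ≤ m / 2 - 1)
    (s f : List (DLetter S))
    (hs : s ∈ scaffold m R) (hf : f ∈ fill m Rh)
    (hdef : (matchWord s f).isSome) :
    (R ∩ Rh).Nonempty ∧
    (∀ a : S, ∀ i : ℕ,
      RestartFill m Rh a (projA a f) i → RestartScaffold m R a (projA a s) i) := by
  have key : ∀ a d, ∀ r ∈ Rh, ((projA a f).drop d).take m = switchWord (slotWord m r a) →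
      r ∈ R ∧ ((projA a s).drop d).take m = slotWord m r a := fun a _ r hr =>
    slot_mem_and_factor_eq_of_matchWord_isSome hslots (hs a) (matchWord_projA_isSome a hdef)
      (hslotsh r hr)
  refine ⟨?_, ?_⟩
  · obtain ⟨a, d, r, hr, hfac⟩ := exists_switchWord_slotWord_factor_of_mem_fill
      (fun r hr => have := hslotsh r hr; ⟨this.1, by omega⟩) hf
    exact ⟨r, (key a d r hr hfac).1, hr⟩
  · rintro a i ⟨hi, -, _, ⟨r, hr, rfl⟩, hfac⟩
    obtain ⟨hrR, hsfac⟩ := key a (i - 1) r hr hfac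
    refine ⟨hi, ?_, r, hrR, hsfac⟩
    have hr' := hslotsh r hr
    have hlen := congrArg List.length hsfac
    simp only [List.length_take, List.length_drop, slotWord_length (m := m) hr'.1 (by omega)] at hlen
    omega

/-- if `s ∈ sc_{R,m}`, `f ∈ fl_{R̂,m}` and `s @ f` is defined, then
`R ∩ R̂ ≠ ∅` and, for every letter `a`, every restarting point of `π_ã(f)` is a
restarting point of `π_ã(s)`. -/
theorem match_scaffold_fill_restart_points (m : ℕ) (R Rh : Set ℕ)
    (hm : 4 ≤ m) (hme : 2 ∣ m) (hR : R.Nonempty) (hRh : Rh.Nonempty)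
    (hslots : ∀ r ∈ R, 1 ≤ r ∧ r ≤ m / 2 - 1)
    (hslotsh : ∀ r ∈ Rh, 1 ≤ r ∧ r ≤ m / 2 - 1)
    (s f : List (DLetter S))
    (hs : s ∈ scaffold m R) (hf : f ∈ fill m Rh)
    (hdef : (matchWord s f).isSome) :
    (R ∩ Rh).Nonempty ∧
    (∀ a : S, ∀ i : ℕ,
      RestartFill m Rh a (projA a f) i → RestartScaffold m R a (projA a s) i) :=
  match_scaffold_fill_restart_points_general m R Rh hslots hslotsh s f hs hf hdef

end Consensual
end

section
/- With Σ, the periods P = {p⁽¹⁾,…,p⁽q⁾}, m, R = {r} and X as defined: for every n ≥ 1 and every word u that is the match of n words of X (i.e., u = x₁ @ x₂ @ … @ x_n with x₁,…,x_n ∈ X), there exist integers n₁,…,n_q ≥ 0 with n₁ + … + n_q = n such that Ψ(π_Σ(u)) = n₁·p⁽¹⁾ + … + n_q·p⁽q⁾. -/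
namespace Consensual

variable {S : Type} [DecidableEq S]

omit [DecidableEq S] in
lemma projSigma_cons (l : DLetter S) (x : List (DLetter S)) :
    projSigma (l :: x) = if l.2 then projSigma x else l.1 :: projSigma x := by
  cases l with
  | mk c b => cases b <;> simp [projSigma, List.filter_cons]

lemma count_match (a : S) : ∀ (x y u : List (DLetter S)), matchWord x y = some u →
    (projSigma u).count a = (projSigma x).count a + (projSigma y).count a
  | [], [], u, h => by
      simp only [matchWord, Option.some_inj] at h; subst h; simp [projSigma]
  | [], _ :: _, u, h => by simp [matchWord] at h
  | _ :: _, [], u, h => by simp [matchWord] at h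
  | lx :: xs, ly :: ys, u, h => by
      simp only [matchWord, Option.bind_eq_bind] at h
      cases hl : matchLetter lx ly with
      | none => rw [hl] at h; simp at h
      | some l =>
        cases hr : matchWord xs ys with
        | none => rw [hl, hr] at h; simp at h
        | some rest =>
          rw [hl, hr] at h
          simp only [Option.bind_some, Option.bind_some, Option.some_inj, pure] at h
          subst h
          have ih := count_match a xs ys rest hr
          unfold matchLetter at hl
          split at hl
          · rename_i hc
            injection hl with hl'
            subst hl'
            obtain ⟨h1, h2⟩ := hc
            cases hx : lx.2 <;> cases hy : ly.2 <;>
              simp_all [projSigma_cons, List.count_cons] <;> omega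
          · exact absurd hl (by simp)

lemma main_aux {k q : ℕ} (p : Fin q → Fin k → ℕ) :
    ∀ (xs : List (List (DLetter (Fin k)))) (u : List (DLetter (Fin k))),
      (∀ x ∈ xs, ∃ i, parikh (projSigma x) = p i) →
      matchListAll xs = some u →
      ∃ ns : Fin q → ℕ, (∑ i, ns i) = xs.length ∧
        parikh (projSigma u) = ∑ i, ns i • p i
  | [], u, _, h => by simp [matchListAll] at h
  | [x], u, hmem, h => by
      simp only [matchListAll, Option.some_inj] at h
      subst h
      obtain ⟨i, hi⟩ := hmem x (by simp)
      refine ⟨fun j => if j = i then 1 else 0, by simp, ?_⟩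
      rw [hi]
      funext a
      simp only [Finset.sum_apply, Pi.smul_apply, smul_eq_mul, ite_mul, one_mul,
        zero_mul, Finset.sum_ite_eq', Finset.mem_univ, if_true]
  | x :: y :: rest, u, hmem, h => by
      have hdef : matchListAll (x :: y :: rest) =
          (matchListAll (y :: rest)).bind (fun u => matchWord x u) := rfl
      rw [hdef] at h
      cases hr : matchListAll (y :: rest) with
      | none => rw [hr] at h; simp at h
      | some u' =>
        rw [hr] at h
        simp only [Option.bind_some] at h
        obtain ⟨ns', hsum, hpar⟩ := main_aux p (y :: rest) u'
          (fun z hz => hmem z (List.mem_cons_of_mem x hz)) hr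
        obtain ⟨i, hi⟩ := hmem x (by simp)
        refine ⟨fun j => ns' j + if j = i then 1 else 0,
          by simp [Finset.sum_add_distrib, hsum], ?_⟩
        funext a
        have hc := count_match a x u' u h
        have hpa := congrFun hpar a
        have hia := congrFun hi a
        simp only [parikh] at hc hpa hia ⊢
        simp only [Finset.sum_apply, Pi.smul_apply, smul_eq_mul] at hpa ⊢
        rw [hc, hia, hpa]
        simp only [add_mul, ite_mul, one_mul, zero_mul, Finset.sum_add_distrib,
          Finset.sum_ite_eq', Finset.mem_univ, if_true]
        ring

/-- if `u = x₁ @ … @ x_n` with all `xᵢ ∈ X`, then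
`Ψ(π_Σ(u)) = n₁·p⁽¹⁾ + … + n_q·p⁽q⁾` for some `n₁ + … + n_q = n`. -/
theorem match_of_X_parikh (k q : ℕ) (hk : 0 < k) (hq : 0 < q)
    (p : Fin q → Fin k → ℕ) (heven : ∀ i a, 2 ∣ p i a)
    (m r : ℕ) (hm : 4 ≤ m) (hme : 2 ∣ m) (hr : 0 < r) (hrm : r < m / 2)
    (n : ℕ) (hn : 1 ≤ n) (u : List (DLetter (Fin k)))
    (xs : List (List (DLetter (Fin k)))) (hlen : xs.length = n)
    (hmem : ∀ x ∈ xs, x ∈ Xlang m r p)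
    (hmatch : matchListAll xs = some u) :
    ∃ ns : Fin q → ℕ, (∑ i, ns i) = n ∧
      parikh (projSigma u) = ∑ i, ns i • p i := by
  obtain ⟨ns, hsum, hpar⟩ := main_aux p xs u (fun x hx => (hmem x hx).2) hmatch
  exact ⟨ns, by rw [hsum, hlen], hpar⟩

end Consensual
end

section
/- With L, Σ, c, the periods P = {p⁽¹⁾,…,p⁽q⁾}, m, R = {r}, X, Y, W and D as defined, the consensual language C(D) is commutative: if u ∈ C(D) and v ∈ Σ* with Ψ(v) = Ψ(u), then v ∈ C(D). -/
/-!
Call a language over `Σ̃` swap-closed if it is closed under exchanging two adjacent letters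
whose underlying letters in `Σ` differ. The base `D` is swap-closed: `X` because `sc_{R,m}`,
`switch`, `Σ̊*` and the Parikh condition only see the projections `π_ã`; `Y` because it is a
shuffle of languages over single letters; and appending words of `a*` after the last `a`/`å`
keeps swap-closure, the only new adjacencies being letters of the appended block against
letters different from `a`. Matching is letterwise and matched letters have the same
underlying letter, so swap-closure passes to every `D^{i@}`, hence to `C(D)`. Over `Σ`,
adjacent transpositions generate all permutations, so `C(D)` is commutative.
-/

namespace Consensual

section SwapClosed

variable {α β : Type}

def SwapClosed (f : α → β) (B : Language α) : Prop :=
  ∀ (l₁ : List α) (x y : α) (l₂ : List α), f x ≠ f y →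
    l₁ ++ x :: y :: l₂ ∈ B → l₁ ++ y :: x :: l₂ ∈ B

variable {f : α → β} {B C : Language α}

theorem SwapClosed.sup (hB : SwapClosed f B) (hC : SwapClosed f C) : SwapClosed f (B ⊔ C) := by
  rintro l₁ x y l₂ hxy (h | h)
  exacts [Or.inl (hB l₁ x y l₂ hxy h), Or.inr (hC l₁ x y l₂ hxy h)]

theorem SwapClosed.inf (hB : SwapClosed f B) (hC : SwapClosed f C) :
    SwapClosed f (B ⊓ C) :=
  fun l₁ x y l₂ hxy h => ⟨hB l₁ x y l₂ hxy h.1, hC l₁ x y l₂ hxy h.2⟩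

theorem SwapClosed.foldl {γ : Type} {g : Language α → γ → Language α}
    (hg : ∀ B c, SwapClosed f B → SwapClosed f (g B c)) (l : List γ) (hB : SwapClosed f B) :
    SwapClosed f (l.foldl g B) := by
  induction l generalizing B with
  | nil => exact hB
  | cons c l ih => exact ih (hg B c hB)

theorem swapClosed_of_perm (hB : ∀ u v, u.Perm v → u ∈ B → v ∈ B) : SwapClosed f B :=
  fun l₁ x y l₂ _ => hB _ _ ((List.Perm.swap y x l₂).append_left l₁)

theorem swapClosed_of_forall_eq (hB : ∀ w ∈ B, ∀ x ∈ w, ∀ y ∈ w, f x = f y) :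
    SwapClosed f B :=
  fun _ x y _ hxy h => absurd (hB _ h x (by simp) y (by simp)) hxy

theorem SwapClosed.preimage_map {g : α → α} (hg : ∀ x, f (g x) = f x) (hB : SwapClosed f B) :
    SwapClosed f {w | w.map g ∈ B} := by
  intro l₁ x y l₂ hxy h
  show List.map g _ ∈ B
  simpa using hB (l₁.map g) (g x) (g y) (l₂.map g) (by rwa [hg, hg]) (by simpa using h.out)

theorem IsShuffle.swap {x y z₁ z₂ : List α} {c d : α} (h : IsShuffle x y (z₁ ++ c :: d :: z₂)) :
    (∃ x₁ x₂, x = x₁ ++ c :: d :: x₂ ∧ IsShuffle (x₁ ++ d :: c :: x₂) y (z₁ ++ d :: c :: z₂)) ∨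
    (∃ y₁ y₂, y = y₁ ++ c :: d :: y₂ ∧ IsShuffle x (y₁ ++ d :: c :: y₂) (z₁ ++ d :: c :: z₂)) ∨
    IsShuffle x y (z₁ ++ d :: c :: z₂) := by
  induction z₁ generalizing x y with
  | nil =>
    cases h with
    | left h => cases h with
      | left h => exact Or.inl ⟨[], _, rfl, .left (.left h)⟩
      | right h => exact Or.inr (Or.inr (.right (.left h)))
    | right h => cases h with
      | left h => exact Or.inr (Or.inr (.left (.right h)))
      | right h => exact Or.inr (Or.inl ⟨[], _, rfl, .right (.right h)⟩)
  | cons e z₁ ih =>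
    cases h with
    | left h =>
      rcases ih h with ⟨x₁, x₂, rfl, h'⟩ | ⟨y₁, y₂, rfl, h'⟩ | h'
      exacts [Or.inl ⟨e :: x₁, x₂, rfl, .left h'⟩, Or.inr (Or.inl ⟨y₁, y₂, rfl, .left h'⟩),
        Or.inr (Or.inr (.left h'))]
    | right h =>
      rcases ih h with ⟨x₁, x₂, rfl, h'⟩ | ⟨y₁, y₂, rfl, h'⟩ | h'
      exacts [Or.inl ⟨x₁, x₂, rfl, .right h'⟩, Or.inr (Or.inl ⟨e :: y₁, y₂, rfl, .right h'⟩),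
        Or.inr (Or.inr (.right h'))]

theorem IsShuffle.cons_inv {x y z : List α} {c : α} (h : IsShuffle x y (c :: z)) :
    (∃ x', x = c :: x' ∧ IsShuffle x' y z) ∨ (∃ y', y = c :: y' ∧ IsShuffle x y' z) := by
  cases h with
  | left h => exact Or.inl ⟨_, rfl, h⟩
  | right h => exact Or.inr ⟨_, rfl, h⟩

theorem SwapClosed.shuffleLang (hB : SwapClosed f B) (hC : SwapClosed f C) :
    SwapClosed f (shuffleLang B C) := by
  rintro l₁ x y l₂ hxy ⟨u, hu, v, hv, h⟩
  rcases h.swap with ⟨u₁, u₂, rfl, h'⟩ | ⟨v₁, v₂, rfl, h'⟩ | h'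
  exacts [⟨_, hB u₁ x y u₂ hxy hu, v, hv, h'⟩, ⟨u, hu, _, hC v₁ x y v₂ hxy hv, h'⟩,
    ⟨u, hu, v, hv, h'⟩]

theorem SwapClosed.mem_of_perm {L : Language α} (hL : SwapClosed id L) {u v : List α}
    (huv : u.Perm v) (hu : u ∈ L) : v ∈ L := by
  suffices ∀ l₁ l₂, l₁ ++ u ++ l₂ ∈ L → l₁ ++ v ++ l₂ ∈ L by simpa using this [] [] (by simpa)
  clear hu
  induction huv with
  | nil => exact fun _ _ h => h
  | cons a _ ih => simpa using fun l₁ l₂ => ih (l₁ ++ [a]) l₂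
  | swap x y l =>
    intro l₁ l₂ h
    by_cases hxy : y = x
    · simpa [hxy] using h
    · simpa using hL l₁ y x (l ++ l₂) hxy (by simpa using h)
  | trans _ _ ih₁ ih₂ => exact fun l₁ l₂ h => ih₂ l₁ l₂ (ih₁ l₁ l₂ h)

end SwapClosed

section Letters

variable {S : Type}

theorem switchWord_switchWord (w : List (DLetter S)) : switchWord (switchWord w) = w := by
  simp [switchWord, Function.comp_def]

theorem fst_eq_of_mem_kstar_Rm {m : ℕ} {R : Set ℕ} {a : S} {w : List (DLetter S)}
    (hw : w ∈ KStar.kstar (Rm m R a)) {x : DLetter S} (hx : x ∈ w) : x.1 = a := by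
  obtain ⟨L, rfl, hL⟩ := Language.mem_kstar.mp hw
  obtain ⟨y, hy, hxy⟩ := List.mem_flatten.mp hx
  obtain ⟨r, -, rfl⟩ := hL y hy
  simp only [slotWord, List.mem_cons, List.mem_append, List.mem_replicate] at hxy
  rcases hxy with rfl | ⟨-, rfl⟩ | rfl | ⟨-, rfl⟩ <;> rfl

end Letters

section Match

variable {S : Type} [DecidableEq S]

theorem fst_eq_of_matchLetter_eq_some {x y z : DLetter S} (h : matchLetter x y = some z) :
    x.1 = z.1 ∧ y.1 = z.1 := by
  unfold matchLetter at h
  split_ifs at h with hxy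
  cases h
  exact ⟨rfl, hxy.1.symm⟩

theorem matchWord_cons_cons_eq_some_iff {x y z : DLetter S} {u v w : List (DLetter S)} :
    matchWord (x :: u) (y :: v) = some (z :: w) ↔
      matchLetter x y = some z ∧ matchWord u v = some w := by
  simp only [matchWord]
  cases matchLetter x y <;> cases matchWord u v <;> simp

theorem matchWord_eq_some_cons {u v w : List (DLetter S)} {z : DLetter S}
    (h : matchWord u v = some (z :: w)) :
    ∃ x u' y v', u = x :: u' ∧ v = y :: v' ∧
      matchLetter x y = some z ∧ matchWord u' v' = some w := by
  match u, v, h with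
  | [], [], h => simp [matchWord] at h
  | [], _ :: _, h => simp [matchWord] at h
  | _ :: _, [], h => simp [matchWord] at h
  | x :: u', y :: v', h => exact ⟨x, u', y, v', rfl, rfl, matchWord_cons_cons_eq_some_iff.mp h⟩

theorem matchWord_eq_some_nil {u v : List (DLetter S)} (h : matchWord u v = some []) :
    u = [] ∧ v = [] := by
  match u, v, h with
  | [], [], _ => exact ⟨rfl, rfl⟩
  | [], _ :: _, h | _ :: _, [], h => simp [matchWord] at h
  | x :: u, y :: v, h =>
    cases hx : matchLetter x y <;> cases hw : matchWord u v <;> simp [matchWord, hx, hw] at h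

theorem matchWord_append {u₁ v₁ w₁ u₂ v₂ w₂ : List (DLetter S)}
    (h₁ : matchWord u₁ v₁ = some w₁) (h₂ : matchWord u₂ v₂ = some w₂) :
    matchWord (u₁ ++ u₂) (v₁ ++ v₂) = some (w₁ ++ w₂) := by
  induction w₁ generalizing u₁ v₁ with
  | nil =>
    obtain ⟨rfl, rfl⟩ := matchWord_eq_some_nil h₁
    exact h₂
  | cons z w₁ ih =>
    obtain ⟨x, u', y, v', rfl, rfl, hz, h'⟩ := matchWord_eq_some_cons h₁
    exact matchWord_cons_cons_eq_some_iff.mpr ⟨hz, ih h'⟩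

theorem matchWord_eq_some_append {u v w₁ w₂ : List (DLetter S)}
    (h : matchWord u v = some (w₁ ++ w₂)) :
    ∃ u₁ u₂ v₁ v₂, u = u₁ ++ u₂ ∧ v = v₁ ++ v₂ ∧
      matchWord u₁ v₁ = some w₁ ∧ matchWord u₂ v₂ = some w₂ := by
  induction w₁ generalizing u v with
  | nil => exact ⟨[], u, [], v, rfl, rfl, rfl, h⟩
  | cons z w₁ ih =>
    obtain ⟨x, u', y, v', rfl, rfl, hz, h'⟩ := matchWord_eq_some_cons h
    obtain ⟨u₁, u₂, v₁, v₂, rfl, rfl, h₁, h₂⟩ := ih h'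
    exact ⟨x :: u₁, u₂, y :: v₁, v₂, rfl, rfl, matchWord_cons_cons_eq_some_iff.mpr ⟨hz, h₁⟩, h₂⟩

theorem SwapClosed.matchLang {B C : Language (DLetter S)} (hB : SwapClosed Prod.fst B)
    (hC : SwapClosed Prod.fst C) : SwapClosed Prod.fst (matchLang B C) := by
  rintro l₁ x y l₂ hxy ⟨u, hu, v, hv, h⟩
  obtain ⟨u₁, u₂, v₁, v₂, rfl, rfl, h₁, h₂⟩ := matchWord_eq_some_append h
  obtain ⟨a, u₂, a', v₂, rfl, rfl, hx, h₂⟩ := matchWord_eq_some_cons h₂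
  obtain ⟨b, u₂, b', v₂, rfl, rfl, hy, h₂⟩ := matchWord_eq_some_cons h₂
  have hab : a.1 ≠ b.1 := by
    rwa [(fst_eq_of_matchLetter_eq_some hx).1, (fst_eq_of_matchLetter_eq_some hy).1]
  have hab' : a'.1 ≠ b'.1 := by
    rwa [(fst_eq_of_matchLetter_eq_some hx).2, (fst_eq_of_matchLetter_eq_some hy).2]
  refine ⟨_, hB u₁ a b u₂ hab hu, _, hC v₁ a' b' v₂ hab' hv, matchWord_append h₁ ?_⟩
  simp only [matchWord_cons_cons_eq_some_iff]
  exact ⟨hy, hx, h₂⟩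

theorem SwapClosed.matchIter {B : Language (DLetter S)} (hB : SwapClosed Prod.fst B) (i : ℕ) :
    SwapClosed Prod.fst (matchIter B i) := by
  induction i with
  | zero => exact hB
  | succ i ih => exact ih.matchLang hB

theorem SwapClosed.matchClosure {B : Language (DLetter S)} (hB : SwapClosed Prod.fst B) :
    SwapClosed Prod.fst (matchClosure B) := by
  intro l₁ x y l₂ hxy h
  obtain ⟨i, hi⟩ := Language.mem_iSup.mp h
  exact Language.mem_iSup.mpr ⟨i, hB.matchIter i l₁ x y l₂ hxy hi⟩

theorem SwapClosed.consensual {B : Language (DLetter S)} (hB : SwapClosed Prod.fst B) :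
    SwapClosed id (Cons B) := by
  intro l₁ x y l₂ hxy (h : undotWord _ ∈ Consensual.matchClosure B)
  show undotWord _ ∈ Consensual.matchClosure B
  simpa [undotWord] using
    hB.matchClosure (undotWord l₁) (x, false) (y, false) (undotWord l₂) hxy
      (by simpa [undotWord] using h)

theorem SwapClosed.commutativeLang {L : Language S} (hL : SwapClosed id L) :
    CommutativeLang L :=
  fun _ hu _ hv => hL.mem_of_perm (List.perm_iff_count.mpr fun a => (congrFun hv a).symm) hu

end Match

section Base

variable {S : Type} [DecidableEq S]

theorem projA_append_cons_cons_comm (a : S) (l₁ l₂ : List (DLetter S)) {x y : DLetter S}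
    (hxy : x.1 ≠ y.1) : projA a (l₁ ++ y :: x :: l₂) = projA a (l₁ ++ x :: y :: l₂) := by
  by_cases hx : x.1 = a <;> by_cases hy : y.1 = a <;> simp_all [projA]

theorem swapClosed_scaffold (m : ℕ) (R : Set ℕ) : SwapClosed Prod.fst (scaffold (S := S) m R) :=
  fun l₁ _ _ l₂ hxy h a => projA_append_cons_cons_comm a l₁ l₂ hxy ▸ h a

theorem swapClosed_fill (m : ℕ) (R : Set ℕ) : SwapClosed Prod.fst (fill (S := S) m R) := by
  rintro l₁ x y l₂ hxy ⟨⟨u, hu, hw⟩, hnd⟩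
  have hsc : SwapClosed Prod.fst {w | switchWord w ∈ scaffold (S := S) m R} :=
    (swapClosed_scaffold m R).preimage_map fun _ => rfl
  refine ⟨⟨_, hsc l₁ x y l₂ hxy ?_, (switchWord_switchWord _).symm⟩, ?_⟩
  · show switchWord _ ∈ scaffold m R
    rwa [hw, switchWord_switchWord]
  · simpa [dottedStar, allDotted, or_left_comm] using hnd

theorem swapClosed_Xlang {k q : ℕ} (m r : ℕ) (p : Fin q → Fin k → ℕ) :
    SwapClosed Prod.fst (Xlang m r p) := by
  refine (swapClosed_fill m {r}).inf (swapClosed_of_perm ?_)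
  rintro u v huv ⟨i, hi⟩
  refine ⟨i, funext fun a => ?_⟩
  rw [← hi]
  exact (((huv.filter _).map _).count_eq a).symm

theorem swapClosed_Ylang (k m : ℕ) (R : Set ℕ) : SwapClosed Prod.fst (Ylang k m R) := by
  refine SwapClosed.foldl (fun B a hB => hB.shuffleLang ?_) _ ?_
  · exact swapClosed_of_forall_eq fun w hw x hx y hy =>
      (fst_eq_of_mem_kstar_Rm hw hx).trans (fst_eq_of_mem_kstar_Rm hw hy).symm
  · exact swapClosed_of_forall_eq fun w hw => by simp [(Language.mem_one w).mp hw]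

end Base

section Append

variable {S : Type} [DecidableEq S]

theorem splitSuffix_eq (a : S) (w : List (DLetter S)) :
    splitSuffix a w = (w.rdropWhile fun l => l.1 ≠ a, w.rtakeWhile fun l => l.1 ≠ a) :=
  rfl

theorem splitSuffix_spec (a : S) (w : List (DLetter S)) :
    (splitSuffix a w).1 ++ (splitSuffix a w).2 = w ∧ (∀ l ∈ (splitSuffix a w).2, l.1 ≠ a) ∧
      ∀ e ∈ (splitSuffix a w).1.getLast?, e.1 = a := by
  simp only [splitSuffix_eq, List.rdropWhile_append_rtakeWhile, true_and]
  refine ⟨fun l hl => by simpa using List.mem_rtakeWhile_imp hl, fun e he => ?_⟩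
  rw [← List.getLast_of_mem_getLast? he]
  simpa using List.rdropWhile_last_not (fun l : DLetter S => l.1 ≠ a) w
    (List.ne_nil_of_mem (List.mem_of_mem_getLast? he))

theorem splitSuffix_append {a : S} {u v : List (DLetter S)} (hv : ∀ l ∈ v, l.1 ≠ a)
    (hu : ∀ e ∈ u.getLast?, e.1 = a) : splitSuffix a (u ++ v) = (u, v) := by
  induction v using List.reverseRecOn with
  | nil =>
    simp only [splitSuffix_eq, List.append_nil, Prod.mk.injEq, List.rdropWhile_eq_self_iff,
      List.rtakeWhile_eq_nil_iff]
    exact ⟨fun hne => by simpa using hu _ (List.getLast?_eq_some_getLast hne),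
      fun hne => by simpa using hu _ (List.getLast?_eq_some_getLast hne)⟩
  | append_singleton v x ih =>
    have hx : x.1 ≠ a := hv x (by simp)
    simp_all [splitSuffix_eq, ← List.append_assoc]

theorem mem_appendA_iff {a : S} {B : Language (DLetter S)} {A : Language S}
    {w : List (DLetter S)} :
    w ∈ appendA a B A ↔ ∃ u v, u ++ v ∈ B ∧ (∀ l ∈ v, l.1 ≠ a) ∧ (∀ e ∈ u.getLast?, e.1 = a) ∧
      ∃ s ∈ A, ∃ z, IsShuffle v (undotWord s) z ∧ w = u ++ z := by
  constructor
  · rintro ⟨w, hw, s, hs, z, hz, rfl⟩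
    obtain ⟨hsplit, hv, hu⟩ := splitSuffix_spec a w
    exact ⟨_, _, hsplit.symm ▸ hw, hv, hu, s, hs, z, hz, rfl⟩
  · rintro ⟨u, v, huv, hv, hu, s, hs, z, hz, rfl⟩
    exact ⟨u ++ v, huv, s, hs, z, by simpa [splitSuffix_append hv hu] using hz,
      by simp [splitSuffix_append hv hu]⟩

theorem swap_mem_appendA_of_shuffle {a : S} {B : Language (DLetter S)} {A : Language S}
    (hB : SwapClosed Prod.fst B) (hA : ∀ s ∈ A, ∀ b ∈ s, b = a) {x y : DLetter S}
    (hxy : x.1 ≠ y.1) {u v z₁ z₂ : List (DLetter S)} {s : List S} (huv : u ++ v ∈ B)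
    (hv : ∀ l ∈ v, l.1 ≠ a) (hu : ∀ e ∈ u.getLast?, e.1 = a) (hs : s ∈ A)
    (hz : IsShuffle v (undotWord s) (z₁ ++ x :: y :: z₂)) :
    u ++ (z₁ ++ y :: x :: z₂) ∈ appendA a B A := by
  have hsa : ∀ c ∈ undotWord s, c.1 = a := by simpa [undotWord] using hA s hs
  rcases hz.swap with ⟨v₁, v₂, rfl, hz'⟩ | ⟨s₁, s₂, hs', -⟩ | hz'
  · refine mem_appendA_iff.mpr ⟨u, v₁ ++ y :: x :: v₂, ?_, fun l hl => hv l ?_, hu, s, hs, _, hz',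
      rfl⟩
    · simpa using hB (u ++ v₁) x y v₂ hxy (by simpa using huv)
    · simp only [List.mem_append, List.mem_cons] at hl ⊢
      tauto
  · exact absurd ((hsa x (by simp [hs'])).trans (hsa y (by simp [hs'])).symm) hxy
  · exact mem_appendA_iff.mpr ⟨u, v, huv, hv, hu, s, hs, _, hz', rfl⟩

theorem SwapClosed.appendA {a : S} {B : Language (DLetter S)} {A : Language S}
    (hB : SwapClosed Prod.fst B) (hA : ∀ s ∈ A, ∀ b ∈ s, b = a) :
    SwapClosed Prod.fst (appendA a B A) := by
  intro l₁ x y l₂ hxy hw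
  obtain ⟨u, v, huv, hv, hu, s, hs, z, hz, hw⟩ := mem_appendA_iff.mp hw
  rcases List.append_eq_append_iff.mp hw with
    ⟨_ | ⟨x', _ | ⟨y', u₂⟩⟩, rfl, hc⟩ | ⟨z₁, rfl, rfl⟩
  · simpa using
      swap_mem_appendA_of_shuffle (z₁ := []) hB hA hxy huv hv hu hs (by simpa using hc ▸ hz)
  · -- `x` ends `u`, so `y` cannot come from the `a`-block: it is the head of `v`.
    obtain ⟨rfl, rfl⟩ : x = x' ∧ y :: l₂ = z := by simpa using hc
    have hx : x.1 = a := hu x (by simp)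
    rcases hz.cons_inv with ⟨v', rfl, hz'⟩ | ⟨t, ht, -⟩
    · refine mem_appendA_iff.mpr ⟨l₁ ++ [y, x], v', ?_, fun l hl => hv l (by simp [hl]),
        by simpa using hx, s, hs, _, hz', by simp⟩
      simpa using hB l₁ x y _ hxy (by simpa using huv)
    · obtain ⟨b, hb, rfl⟩ := List.mem_map.mp (ht ▸ List.mem_cons_self : y ∈ undotWord s)
      exact absurd (hx.trans (hA s hs b hb).symm) hxy
  · obtain ⟨rfl, rfl, rfl⟩ : x = x' ∧ y = y' ∧ l₂ = u₂ ++ z := by simpa using hc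
    have huv' : l₁ ++ y :: x :: (u₂ ++ v) ∈ B := hB l₁ x y _ hxy (by simpa using huv)
    rcases List.eq_nil_or_concat' u₂ with rfl | ⟨u₃, e, rfl⟩
    · -- `y` ends `u`; after the swap `x` starts the new suffix `x :: v`.
      have hy : y.1 = a := hu y (by simp)
      refine mem_appendA_iff.mpr ⟨l₁ ++ [y], x :: v, by simpa using huv', ?_, by simpa using hy,
        s, hs, _, hz.left, by simp⟩
      exact fun l hl => (List.mem_cons.mp hl).elim (fun h => h ▸ fun hx => hxy (hx.trans hy.symm))
        (hv l)
    · have he : e.1 = a := hu e (by simp [List.getLast?_cons])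
      exact mem_appendA_iff.mpr ⟨l₁ ++ y :: x :: (u₃ ++ [e]), v, by simpa using huv', hv,
        by simpa [List.getLast?_cons] using he, s, hs, z, hz, by simp⟩
  · simpa using swap_mem_appendA_of_shuffle hB hA hxy huv hv hu hs hz

end Append

theorem swapClosed_Dlang {k q : ℕ} (m r : ℕ) (c : Fin k → ℕ) (p : Fin q → Fin k → ℕ) :
    SwapClosed Prod.fst (Dlang m r c p) := by
  refine (swapClosed_Xlang m r p).sup
    (SwapClosed.foldl (fun B a hB => hB.appendA ?_) _ (swapClosed_Ylang k m {r}))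
  rintro _ ⟨w, -, rfl⟩ b hb
  simpa using List.of_mem_filter hb

theorem cons_D_commutative_general (k q : ℕ) (c : Fin k → ℕ) (p : Fin q → Fin k → ℕ) (m r : ℕ) :
    ∀ u ∈ Cons (Dlang m r c p), ∀ v : List (Fin k),
      parikh v = parikh u → v ∈ Cons (Dlang m r c p) :=
  (swapClosed_Dlang m r c p).consensual.commutativeLang

/-- the consensual language `C(D)` is commutative. -/
theorem cons_D_commutative (k q : ℕ) (hk : 0 < k) (hq : 0 < q)
    (L : Language (Fin k)) (c : Fin k → ℕ) (p : Fin q → Fin k → ℕ)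
    (hLcom : CommutativeLang L)
    (hLpsi : parikh '' (L : Set (List (Fin k))) =
      { v | ∃ n : Fin q → ℕ, v = c + ∑ i, n i • p i })
    (heven : ∀ i a, 2 ∣ p i a)
    (m r : ℕ) (hm : 4 ≤ m) (hme : 2 ∣ m) (hr : 0 < r) (hrm : r < m / 2) :
    ∀ u ∈ Cons (Dlang m r c p), ∀ v : List (Fin k),
      parikh v = parikh u → v ∈ Cons (Dlang m r c p) :=
  cons_D_commutative_general k q c p m r

end Consensual
end
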